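/- arXiv:2412.19783 — 5 statements merged into one kernel-verified Lean document; each statement's English description precedes it below -/
import Mathlib

section
/- The number of parking functions of length n is (n+1)^(n-1). -/
/-- A parking function of length `n`: a sequence of positive integers whose
nondecreasing rearrangement `b` satisfies `b i ≤ i` (1-indexed). -/
def IsParkingFunction {n : ℕ} (a : Fin n → ℕ) : Prop :=
  (∀ i, 1 ≤ a i) ∧
    ∃ σ : Equiv.Perm (Fin n), Monotone (a ∘ σ) ∧ ∀ i : Fin n, a (σ i) ≤ (i : ℕ) + 1

/-!
Pollak's circular argument. Let `n` cars with arbitrary preferences `f : Fin n → ZMod (n + 1)`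
park on a circle of `n + 1` spots. Exactly one spot stays empty, and `i ↦ (f i).val + 1` is a
parking function iff the empty spot is the last one. Rotating all preferences rotates the empty
spot, so each orbit of the rotation action on the `(n + 1) ^ n` preference functions has
`n + 1` elements, exactly one of which is a parking function.

Concretely, let `e q` be the number of cars preferring one of the spots `0, …, q - 1` (read
cyclically) minus `q`. By the criterion `k ≤ #{i | a i ≤ k}`, the rotation of `f` by `-j` is a
parking function iff `e j ≤ e (j + k)` for all `k ≤ n`. Since `e` drops by one per turn around
the circle, exactly one `j` in each period has this property: the first minimum of `e`.
-/

open Finset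

lemma Finset.card_filter_comp_perm {α : Type*} [Fintype α] (σ : Equiv.Perm α) (p : α → Prop)
    [DecidablePred p] : #{i | p (σ i)} = #{i | p i} :=
  card_equiv σ (by simp)

lemma Monotone.forall_le_succ_iff_card_filter_le {n : ℕ} {b : Fin n → ℕ} (hb : Monotone b) :
    (∀ i : Fin n, b i ≤ i + 1) ↔ ∀ k ≤ n, k ≤ #{i | b i ≤ k} := by
  constructor
  · intro hle k hk
    calc k = #{i : Fin n | (i : ℕ) < k} := by rw [Fin.card_filter_val_lt, min_eq_right hk]
      _ ≤ #{i | b i ≤ k} := card_le_card fun i hi => by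
        simp only [mem_filter, mem_univ, true_and] at hi ⊢
        linarith [hle i]
  · intro hcard i
    by_contra! hi
    have hle : #{j | b j ≤ i + 1} ≤ #{j : Fin n | (j : ℕ) < i} := card_le_card fun j hj => by
      simp only [mem_filter, mem_univ, true_and] at hj ⊢
      by_contra! hij
      linarith [hb (Fin.le_def.2 hij)]
    have := (hcard (i + 1) i.2).trans hle
    rw [Fin.card_filter_val_lt] at this
    omega

theorem isParkingFunction_iff_le_card_filter {n : ℕ} (a : Fin n → ℕ) :
    IsParkingFunction a ↔ (∀ i, 1 ≤ a i) ∧ ∀ k ≤ n, k ≤ #{i | a i ≤ k} := by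
  refine and_congr_right fun _ => ⟨?_, fun hcard => ?_⟩
  · rintro ⟨σ, hmono, hle⟩ k hk
    exact (hmono.forall_le_succ_iff_card_filter_le.1 hle k hk).trans_eq
      (card_filter_comp_perm σ (a · ≤ k))
  · refine ⟨Tuple.sort a, Tuple.monotone_sort a,
      (Tuple.monotone_sort a).forall_le_succ_iff_card_filter_le.2 fun k hk => ?_⟩
    exact (hcard k hk).trans_eq (card_filter_comp_perm (Tuple.sort a) (a · ≤ k)).symm

lemma IsParkingFunction.apply_le {n : ℕ} {a : Fin n → ℕ} (h : IsParkingFunction a)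
    (i : Fin n) : a i ≤ n := by
  obtain ⟨-, σ, -, hle⟩ := h
  simpa using (hle (σ.symm i)).trans (σ.symm i).isLt

theorem card_isParkingFunction_eq_card_zmod (n : ℕ) :
    Nat.card {a : Fin n → ℕ // IsParkingFunction a} =
      Nat.card {f : Fin n → ZMod (n + 1) // IsParkingFunction fun i => (f i).val + 1} := by
  have hinj : Function.Injective fun (f : Fin n → ZMod (n + 1)) i => (f i).val + 1 :=
    fun f g hfg => funext fun i => ZMod.val_injective _ (by simpa using congr_fun hfg i)
  have himage : {a : Fin n → ℕ | IsParkingFunction a} =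
      (fun (f : Fin n → ZMod (n + 1)) i => (f i).val + 1) ''
        {f | IsParkingFunction fun i => (f i).val + 1} := by
    ext a
    refine ⟨fun ha => ?_, fun ⟨f, hf, hfa⟩ => hfa ▸ hf⟩
    have hval : ∀ i, ((a i - 1 : ℕ) : ZMod (n + 1)).val + 1 = a i := fun i => by
      rw [ZMod.val_cast_of_lt (by have := ha.apply_le i; omega)]
      have := ha.1 i
      omega
    refine ⟨fun i => ((a i - 1 : ℕ) : ZMod (n + 1)), ?_, funext hval⟩
    show IsParkingFunction _
    simp only [hval]
    exact ha
  exact (congrArg (fun s : Set _ => Nat.card s) himage).trans (Nat.card_image_of_injective hinj _)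

theorem card_subtype_mul_card_eq_of_existsUnique_vadd {G X : Type*} [AddGroup G]
    [AddAction G X] (P : X → Prop) (h : ∀ x, ∃! g : G, P (g +ᵥ x)) :
    Nat.card {x // P x} * Nat.card G = Nat.card X := by
  choose g hg huniq using h
  have e : X ≃ {x // P x} × G :=
    { toFun := fun x => (⟨g x +ᵥ x, hg x⟩, g x)
      invFun := fun y => -y.2 +ᵥ y.1.1
      left_inv := fun x => by simp
      right_inv := fun ⟨⟨x, hx⟩, c⟩ => by
        have hc : g (-c +ᵥ x) = c := (huniq _ c (by simpa using hx)).symm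
        ext <;> simp [hc] }
  rw [← Nat.card_prod, Nat.card_congr e]

section DriftingSequence

variable {p : ℕ} (S : ℕ → ℤ)

lemma not_lt_of_forall_le_add_of_forall_le_add (hS : ∀ q, S (q + p) = S q - 1) {j₁ j₂ : ℕ}
    (hj₂ : j₂ < j₁ + p) (h₁ : ∀ k < p, S j₁ ≤ S (j₁ + k))
    (h₂ : ∀ k < p, S j₂ ≤ S (j₂ + k)) :
    ¬j₁ < j₂ := by
  intro h
  have h₁₂ := h₁ (j₂ - j₁) (by omega)
  have h₂₁ := h₂ (j₁ + p - j₂) (by omega)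
  rw [show j₁ + (j₂ - j₁) = j₂ by omega] at h₁₂
  rw [show j₂ + (j₁ + p - j₂) = j₁ + p by omega, hS] at h₂₁
  omega

lemma exists_lt_forall_le_add (hS : ∀ q, S (q + p) = S q - 1) :
    ∃ j < p, ∀ k < p, S j ≤ S (j + k) := by
  have hp : 0 < p := Nat.pos_of_ne_zero fun hp => by
    have := hS 0
    rw [hp, add_zero] at this
    omega
  have hmin : ∃ j, j < p ∧ ∀ l < p, S j ≤ S l := by
    obtain ⟨j, hj, hjmin⟩ := exists_min_image (range p) S ⟨0, mem_range.2 hp⟩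
    exact ⟨j, mem_range.1 hj, fun l hl => hjmin l (mem_range.2 hl)⟩
  set j := Nat.find hmin
  obtain ⟨hjp, hjmin⟩ := Nat.find_spec hmin
  have hbefore : ∀ l < j, S j < S l := fun l hl => by
    have := Nat.find_min hmin hl
    push Not at this
    obtain ⟨l', hl', hlt⟩ := this (by omega)
    exact (hjmin l' hl').trans_lt hlt
  refine ⟨j, hjp, fun k hk => ?_⟩
  rcases lt_or_ge (j + k) p with hlt | hge
  · exact hjmin _ hlt
  · have := hbefore (j + k - p) (by omega)
    rw [show j + k = j + k - p + p by omega, hS]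
    omega

lemma existsUnique_lt_and_forall_le_add (hS : ∀ q, S (q + p) = S q - 1) :
    ∃! j, j < p ∧ ∀ k < p, S j ≤ S (j + k) := by
  obtain ⟨j, hjp, hj⟩ := exists_lt_forall_le_add S hS
  refine ⟨j, ⟨hjp, hj⟩, fun j' ⟨hj'p, hj'⟩ => le_antisymm ?_ ?_⟩
  · exact not_lt.1 (not_lt_of_forall_le_add_of_forall_le_add S hS (by omega) hj hj')
  · exact not_lt.1 (not_lt_of_forall_le_add_of_forall_le_add S hS (by omega) hj' hj)

end DriftingSequence

namespace ParkingFunction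

variable {n : ℕ} (f : Fin n → ZMod (n + 1))

def excess (q : ℕ) : ℤ := ∑ t ∈ range q, ((#{i | f i = (t : ZMod (n + 1))} : ℤ) - 1)

lemma card_filter_val_sub_lt (j k : ℕ) (hk : k ≤ n + 1) :
    #{i | (f i - (j : ZMod (n + 1))).val < k} =
      ∑ s ∈ range k, #{i | f i = ((j + s : ℕ) : ZMod (n + 1))} := by
  rw [card_eq_sum_card_fiberwise (f := fun i => (f i - (j : ZMod (n + 1))).val) (t := range k)
    fun i hi => mem_range.2 (mem_filter.1 hi).2]
  refine sum_congr rfl fun s hs => congrArg card ?_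
  have hs' : s < n + 1 := (mem_range.1 hs).trans_le hk
  ext i
  simp only [mem_filter, mem_univ, true_and, Nat.cast_add]
  constructor
  · rintro ⟨-, hval⟩
    rw [← sub_eq_iff_eq_add', ← ZMod.natCast_zmod_val (f i - (j : ZMod (n + 1))), hval]
  · intro hfi
    rw [hfi, add_sub_cancel_left, ZMod.val_cast_of_lt hs']
    exact ⟨mem_range.1 hs, rfl⟩

lemma excess_add (j k : ℕ) (hk : k ≤ n + 1) :
    excess f (j + k) = excess f j + #{i | (f i - (j : ZMod (n + 1))).val < k} - k := by
  rw [excess, sum_range_add, card_filter_val_sub_lt f j k hk, sum_sub_distrib]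
  simp only [excess, sum_sub_distrib, sum_const, card_range, Int.nsmul_eq_mul, mul_one,
    Nat.cast_add, Nat.cast_sum]
  ring

lemma excess_add_period (q : ℕ) : excess f (q + (n + 1)) = excess f q - 1 := by
  rw [excess_add f q (n + 1) le_rfl, filter_true_of_mem fun i _ => ZMod.val_lt _]
  simp only [card_univ, Fintype.card_fin, Nat.cast_add, Nat.cast_one]
  ring

lemma isParkingFunction_val_sub_add_one_iff (j : ℕ) :
    IsParkingFunction (fun i => (f i - (j : ZMod (n + 1))).val + 1) ↔
      ∀ k < n + 1, excess f j ≤ excess f (j + k) := by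
  simp only [isParkingFunction_iff_le_card_filter, Nat.add_one_le_iff, le_add_iff_nonneg_left,
    zero_le, implies_true, true_and]
  constructor <;> intro h k hk <;> have := h k (by omega) <;>
    have := excess_add f j k (by omega) <;> omega

theorem existsUnique_vadd_isParkingFunction :
    ∃! c : ZMod (n + 1), IsParkingFunction fun i => ((c +ᵥ f) i).val + 1 := by
  have hrot (j : ℕ) : ((-j : ZMod (n + 1)) +ᵥ f) = fun i => f i - j := by
    ext i
    simp [neg_add_eq_sub]
  obtain ⟨j, ⟨-, hj⟩, huniq⟩ :=
    existsUnique_lt_and_forall_le_add (excess f) (excess_add_period f)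
  refine ⟨-j, ?_, fun c hc => ?_⟩
  · simpa only [hrot] using (isParkingFunction_val_sub_add_one_iff f j).2 hj
  · have hc' : c = -((-c).val : ZMod (n + 1)) := by simp
    rw [hc', hrot] at hc
    rw [hc', huniq _ ⟨ZMod.val_lt _, (isParkingFunction_val_sub_add_one_iff f _).1 hc⟩]

end ParkingFunction

/-- The number of parking functions of length `n` is `(n+1)^(n-1)`. -/
theorem card_parkingFunctions (n : ℕ) :
    Nat.card {a : Fin n → ℕ // IsParkingFunction a} = (n + 1) ^ (n - 1) := by
  have hcount := card_subtype_mul_card_eq_of_existsUnique_vadd (G := ZMod (n + 1))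
    (fun f : Fin n → ZMod (n + 1) => IsParkingFunction fun i => (f i).val + 1)
    ParkingFunction.existsUnique_vadd_isParkingFunction
  rw [Nat.card_fun, Nat.card_zmod, Nat.card_fin] at hcount
  rw [card_isParkingFunction_eq_card_zmod]
  apply Nat.eq_of_mul_eq_mul_right n.succ_pos
  rw [hcount]
  rcases n with _ | n <;> simp [pow_succ]
end

section
/- If f(x) = a_0 + a_1 x + ... + a_m x^m is a polynomial with nonnegative real coefficients that form a log-concave sequence with no internal zeros, then the coefficients of the shifted polynomial f(1+x) also form a log-concave sequence. -/
open Polynomial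

/-- A real polynomial has log-concave coefficients if `a_{i-1} * a_{i+1} ≤ a_i ^ 2` for all
interior indices (the inequality is trivial outside the support). -/
def PolyLogConcaveR (p : Polynomial ℝ) : Prop :=
  ∀ i : ℕ, p.coeff i * p.coeff (i + 2) ≤ p.coeff (i + 1) ^ 2

/-- The coefficient sequence of `p` has no internal zeros. -/
def NoInternalZeros (p : Polynomial ℝ) : Prop :=
  ∀ i j k : ℕ, i < j → j < k → p.coeff i ≠ 0 → p.coeff k ≠ 0 → p.coeff j ≠ 0

open Finset


/-- Partial Vandermonde sum. -/
def Abin (s p q t : ℕ) : ℕ := ∑ i ∈ range t, (Nat.choose i p) * (Nat.choose (s - i) q)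

/-- Closed-ish form for the partial Vandermonde sum. -/
def Rbin (s p q t : ℕ) : ℕ :=
  ∑ j ∈ range (q + 1), (Nat.choose t (p + 1 + j)) * (Nat.choose (s + 1 - t) (q - j))

lemma Rbin_succ (s p q t : ℕ) (ht : t ≤ s) :
    Rbin s p q (t + 1) = Rbin s p q t + t.choose p * (s - t).choose q := by
  have hu : s + 1 - (t + 1) = s - t := by omega
  have hu2 : s + 1 - t = (s - t) + 1 := by omega
  -- LHS expansion
  have hL : Rbin s p q (t + 1)
      = (∑ j ∈ range (q + 1), t.choose (p + 1 + j) * (s - t).choose (q - j))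
        + ∑ j ∈ range (q + 1), t.choose (p + j) * (s - t).choose (q - j) := by
    unfold Rbin
    rw [hu, ← Finset.sum_add_distrib]
    refine Finset.sum_congr rfl fun j hj => ?_
    have h1 : p + 1 + j = (p + j) + 1 := by omega
    rw [h1, Nat.choose_succ_succ' t (p + j)]
    ring
  -- RHS expansion
  have hR : Rbin s p q t
      = (∑ j ∈ range (q + 1), t.choose (p + 1 + j) * (s - t).choose (q - j))
        + ∑ j ∈ range q, t.choose (p + 1 + j) * (s - t).choose (q - j - 1) := by
    unfold Rbin
    rw [hu2]
    have split : ∀ j ∈ range (q + 1),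
        t.choose (p + 1 + j) * ((s - t) + 1).choose (q - j)
        = t.choose (p + 1 + j) * (s - t).choose (q - j)
          + (if j < q then t.choose (p + 1 + j) * (s - t).choose (q - j - 1) else 0) := by
      intro j hj
      rcases lt_or_ge j q with h | h
      · obtain ⟨r, hr⟩ : ∃ r, q - j = r + 1 := ⟨q - j - 1, by omega⟩
        have hr2 : q - j - 1 = r := by omega
        rw [if_pos h, hr2, hr, Nat.choose_succ_succ' (s - t) r]
        ring
      · have hjq : j = q := by simp at hj; omega
        subst hjq
        simp
    rw [Finset.sum_congr rfl split, Finset.sum_add_distrib]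
    congr 1
    rw [Finset.sum_range_succ]
    simp only [lt_self_iff_false, if_false, add_zero]
    exact Finset.sum_congr rfl fun j hj => if_pos (Finset.mem_range.mp hj)
  rw [hL, hR]
  have key : ∑ j ∈ range (q + 1), t.choose (p + j) * (s - t).choose (q - j)
      = (∑ j ∈ range q, t.choose (p + 1 + j) * (s - t).choose (q - j - 1))
        + t.choose p * (s - t).choose q := by
    rw [Finset.sum_range_succ' (fun j => t.choose (p + j) * (s - t).choose (q - j)) q]
    simp only [Nat.add_zero, Nat.sub_zero]
    congr 1
    refine Finset.sum_congr rfl fun j hj => ?_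
    congr 2 <;> omega
  rw [key]; ring

lemma Abin_eq_Rbin (s p q : ℕ) : ∀ t, t ≤ s + 1 → Abin s p q t = Rbin s p q t := by
  intro t
  induction t with
  | zero =>
    intro _
    simp [Abin, Rbin, Nat.choose_eq_zero_of_lt (show 0 < p + 1 + _ by omega)]
  | succ t ih =>
    intro ht
    have ht' : t ≤ s := by omega
    rw [Abin, Finset.sum_range_succ, ← Abin, ih (by omega), Rbin_succ s p q t ht']

lemma Abin_total (s p q : ℕ) : Abin s p q (s + 1) = (s + 1).choose (p + q + 1) := by
  rw [Abin_eq_Rbin s p q (s+1) le_rfl, Rbin, Nat.sub_self, Finset.sum_range_succ]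
  have h1 : ∀ j ∈ range q, (s+1).choose (p + 1 + j) * (Nat.choose 0 (q - j)) = 0 := by
    intro j hj
    have : 0 < q - j := by simp at hj; omega
    simp [Nat.choose_eq_zero_of_lt this]
  rw [Finset.sum_eq_zero h1, zero_add, Nat.sub_self]
  have h2 : p + 1 + q = p + q + 1 := by omega
  simp [h2]

lemma choose_tp2 (t u k : ℕ) (h : t ≤ u) :
    t.choose (k + 2) * u.choose (k + 1) ≤ t.choose (k + 1) * u.choose (k + 2) := by
  have h1 := Nat.choose_succ_right_eq t (k + 1)
  have h2 := Nat.choose_succ_right_eq u (k + 1)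
  have hk : 0 < k + 2 := by omega
  refine Nat.le_of_mul_le_mul_right ?_ hk
  calc t.choose (k + 2) * u.choose (k + 1) * (k + 2)
      = (t.choose (k + 2) * (k + 2)) * u.choose (k + 1) := by ring
    _ = (t.choose (k + 1) * (t - (k + 1))) * u.choose (k + 1) := by rw [h1]
    _ ≤ (t.choose (k + 1) * (u - (k + 1))) * u.choose (k + 1) := by
        have h3 : t - (k+1) ≤ u - (k+1) := by omega
        exact Nat.mul_le_mul_right _ (Nat.mul_le_mul_left _ h3)
    _ = t.choose (k + 1) * (u.choose (k + 1) * (u - (k + 1))) := by ring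
    _ = t.choose (k + 1) * (u.choose (k + 2) * (k + 2)) := by rw [← h2]
    _ = t.choose (k + 1) * u.choose (k + 2) * (k + 2) := by ring

/-- key inequality between partial sums -/
lemma Abin_ineq (s k t : ℕ) (ht : 2 * t ≤ s + 1) :
    2 * Abin s (k+1) (k+1) t ≤ Abin s k (k+2) t + Abin s (k+2) k t := by
  have hts : t ≤ s + 1 := by omega
  have htu : t ≤ s + 1 - t := by omega
  rw [Abin_eq_Rbin _ _ _ t hts, Abin_eq_Rbin _ _ _ t hts, Abin_eq_Rbin _ _ _ t hts]
  have e1 : Rbin s k (k+2) t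
      = t.choose (k+1) * (s+1-t).choose (k+2) + Rbin s (k+1) (k+1) t := by
    rw [Rbin, Finset.sum_range_succ' (fun j => t.choose (k + 1 + j) * (s + 1 - t).choose (k + 2 - j)) (k+2)]
    rw [Rbin]
    simp only [Nat.add_zero, Nat.sub_zero]
    rw [add_comm]
    congr 1
    refine Finset.sum_congr rfl fun j hj => ?_
    congr 2 <;> omega
  have e2 : Rbin s (k+1) (k+1) t
      = t.choose (k+2) * (s+1-t).choose (k+1) + Rbin s (k+2) k t := by
    rw [Rbin, Finset.sum_range_succ' (fun j => t.choose (k + 2 + j) * (s + 1 - t).choose (k + 1 - j)) (k+1)]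
    rw [Rbin]
    simp only [Nat.add_zero, Nat.sub_zero]
    rw [add_comm]
    congr 1
    refine Finset.sum_congr rfl fun j hj => ?_
    congr 2 <;> omega
  have hXY := choose_tp2 t (s + 1 - t) k htu
  omega

/-- Splitting `range (s+1)` into initial segment, middle interval, and reflected initial segment. -/
lemma sum_range_split (g : ℕ → ℕ) (s t : ℕ) (ht : 2 * t ≤ s + 1) :
    ∑ i ∈ range (s + 1), g i
      = (∑ i ∈ range t, g i) + (∑ i ∈ Icc t (s - t), g i) + ∑ i ∈ range t, g (s - i) := by
  have h2 : t ≤ s + 1 - t := by omega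
  have h3 : s + 1 - t ≤ s + 1 := by omega
  have e1 : (∑ i ∈ Ico 0 t, g i) + (∑ i ∈ Ico t (s + 1), g i) = ∑ i ∈ Ico 0 (s + 1), g i :=
    Finset.sum_Ico_consecutive g (Nat.zero_le t) (by omega)
  have e2 : (∑ i ∈ Ico t (s + 1 - t), g i) + (∑ i ∈ Ico (s + 1 - t) (s + 1), g i)
      = ∑ i ∈ Ico t (s + 1), g i := Finset.sum_Ico_consecutive g h2 h3
  have hIcc : Finset.Ico t (s + 1 - t) = Finset.Icc t (s - t) := by
    ext x; simp only [Finset.mem_Ico, Finset.mem_Icc]; omega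
  have hrefl : ∑ i ∈ Finset.Ico (s + 1 - t) (s + 1), g i = ∑ i ∈ range t, g (s - i) := by
    refine Finset.sum_nbij' (fun i => s - i) (fun j => s - j) ?_ ?_ ?_ ?_ ?_
    · intro i hi; simp only [Finset.mem_Ico] at hi; simp only [Finset.mem_range]; omega
    · intro j hj; simp only [Finset.mem_range] at hj; simp only [Finset.mem_Ico]; omega
    · intro i hi; simp only [Finset.mem_Ico] at hi; omega
    · intro j hj; simp only [Finset.mem_range] at hj; omega
    · intro i hi
      simp only [Finset.mem_Ico] at hi
      congr 1
      omega
  rw [Finset.range_eq_Ico, ← e1, ← e2, hrefl, hIcc, Finset.range_eq_Ico]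
  ring

/-- The middle-interval sums `Q t` are nonnegative. -/
lemma Q_nonneg (s k t : ℕ) (ht : 2 * t ≤ s + 1) :
    (0:ℝ) ≤ ∑ i ∈ Icc t (s - t),
      ((Nat.choose i (k+1) * Nat.choose (s - i) (k+1) : ℕ) -
        (Nat.choose i k * Nat.choose (s - i) (k+2) : ℕ) : ℝ) := by
  have key : ∀ p q : ℕ,
      (∑ i ∈ range (s + 1), Nat.choose i p * Nat.choose (s - i) q)
        = Abin s p q t + (∑ i ∈ Icc t (s - t), Nat.choose i p * Nat.choose (s - i) q)
          + Abin s q p t := by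
    intro p q
    have hsp := sum_range_split (fun i => Nat.choose i p * Nat.choose (s - i) q) s t ht
    rw [hsp, Abin, Abin]
    have hcongr : ∀ i ∈ range t, Nat.choose (s - i) p * Nat.choose (s - (s - i)) q
        = Nat.choose i q * Nat.choose (s - i) p := by
      intro i hi
      have hi' : i < t := Finset.mem_range.mp hi
      have hss : s - (s - i) = i := by omega
      rw [hss, Nat.mul_comm]
    rw [Finset.sum_congr rfl hcongr]
  have t1 := key (k+1) (k+1)
  have t2 := key k (k+2)
  have htot : (∑ i ∈ range (s + 1), Nat.choose i (k+1) * Nat.choose (s - i) (k+1))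
      = ∑ i ∈ range (s + 1), Nat.choose i k * Nat.choose (s - i) (k+2) := by
    have a1 : (∑ i ∈ range (s + 1), Nat.choose i (k+1) * Nat.choose (s - i) (k+1))
        = Abin s (k+1) (k+1) (s+1) := rfl
    have a2 : (∑ i ∈ range (s + 1), Nat.choose i k * Nat.choose (s - i) (k+2))
        = Abin s k (k+2) (s+1) := rfl
    rw [a1, a2, Abin_total, Abin_total]
    congr 1; omega
  have hineq := Abin_ineq s k t ht
  have hle : (∑ i ∈ Icc t (s - t), Nat.choose i k * Nat.choose (s - i) (k+2))
      ≤ ∑ i ∈ Icc t (s - t), Nat.choose i (k+1) * Nat.choose (s - i) (k+1) := by omega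
  rw [Finset.sum_sub_distrib, ← Nat.cast_sum, ← Nat.cast_sum, sub_nonneg]
  exact_mod_cast hle

/-- Three-way split of an interval sum. -/
lemma sum_Icc_split (g : ℕ → ℝ) (t e : ℕ) :
    ∑ i ∈ Icc t (t + e + 2), g i
      = g t + (∑ i ∈ Icc (t + 1) (t + e + 1), g i) + g (t + e + 2) := by
  have h1 : Finset.Icc t (t + e + 2) = insert t (insert (t + e + 2) (Finset.Icc (t+1) (t+e+1))) := by
    ext x; simp only [Finset.mem_Icc, Finset.mem_insert]; omega
  rw [h1, Finset.sum_insert, Finset.sum_insert]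
  · ring
  · simp only [Finset.mem_Icc]; omega
  · simp only [Finset.mem_Icc, Finset.mem_insert]; omega

/-- Abel-type summation argument. -/
lemma abel_aux (s : ℕ) (m w : ℕ → ℝ)
    (hm0 : ∀ t, 0 ≤ m t)
    (hsym : ∀ t, t ≤ s → m (s - t) = m t)
    (hmono : ∀ t, 2 * t + 2 ≤ s + 1 → m t ≤ m (t + 1))
    (hQ : ∀ t, 2 * t ≤ s + 1 → 0 ≤ ∑ i ∈ Icc t (s - t), w i) :
    0 ≤ ∑ i ∈ range (s + 1), m i * w i := by
  have key : ∀ d t, 2 * t + d = s →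
      m t * (∑ i ∈ Icc t (s - t), w i) ≤ ∑ i ∈ Icc t (s - t), m i * w i := by
    intro d
    induction d using Nat.strong_induction_on with
    | _ d ih =>
      intro t hts
      rcases d with _ | _ | e
      · have h0 : s - t = t := by omega
        rw [h0]
        simp
      · have h0 : s - t = t + 1 := by omega
        have h1 : s - (t + 1) = t := by omega
        have hmt := hsym (t + 1) (by omega)
        rw [h1] at hmt
        have hset : Finset.Icc t (t + 1) = {t, t + 1} := by
          ext x; simp only [Finset.mem_Icc, Finset.mem_insert, Finset.mem_singleton]; omega
        rw [h0, hset, Finset.sum_pair (by omega), Finset.sum_pair (by omega)]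
        apply le_of_eq
        rw [← hmt]
        ring
      · have h0 : s - t = t + e + 2 := by omega
        have h1 : s - (t + 1) = t + e + 1 := by omega
        have hQ1 : 0 ≤ ∑ i ∈ Icc (t + 1) (s - (t + 1)), w i := hQ (t + 1) (by omega)
        rw [h1] at hQ1
        have hmono1 : m t ≤ m (t + 1) := hmono t (by omega)
        have hsymm : m (t + e + 2) = m t := by
          have h2 := hsym (t + e + 2) (by omega)
          have h3 : s - (t + e + 2) = t := by omega
          rw [h3] at h2
          exact h2.symm
        have ihe := ih e (by omega) (t + 1) (by omega)
        rw [h1] at ihe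
        have S2 := sum_Icc_split (fun i => m i * w i) t e
        rw [h0, sum_Icc_split w t e, S2]
        have step : m t * (∑ i ∈ Icc (t + 1) (t + e + 1), w i)
            ≤ ∑ i ∈ Icc (t + 1) (t + e + 1), m i * w i :=
          le_trans (mul_le_mul_of_nonneg_right hmono1 hQ1) ihe
        have expand : m t * (w t + (∑ i ∈ Icc (t + 1) (t + e + 1), w i) + w (t + e + 2))
            = m t * w t + m t * (∑ i ∈ Icc (t + 1) (t + e + 1), w i) + m t * w (t + e + 2) := by
          ring
        rw [expand, hsymm]
        linarith
  have h0 : Finset.range (s + 1) = Finset.Icc 0 (s - 0) := by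
    ext x; simp only [Finset.mem_Icc, Finset.mem_range]; omega
  have hQ0 := hQ 0 (by omega)
  have hk := key s 0 (by omega)
  rw [h0]
  calc (0:ℝ) ≤ m 0 * (∑ i ∈ Icc 0 (s - 0), w i) := mul_nonneg (hm0 0) hQ0
    _ ≤ ∑ i ∈ Icc 0 (s - 0), m i * w i := hk

/-- Interchange inequality for log-concave sequences with no internal zeros. -/
lemma mono_aux (a : ℕ → ℝ) (h0 : ∀ i, 0 ≤ a i)
    (hlc : ∀ i, a i * a (i + 2) ≤ a (i + 1) * a (i + 1))
    (hniz : ∀ i j l, i < j → j < l → a i ≠ 0 → a l ≠ 0 → a j ≠ 0) :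
    ∀ d i, a i * a (i + d + 2) ≤ a (i + 1) * a (i + d + 1) := by
  intro d
  induction d with
  | zero => intro i; exact hlc i
  | succ d ih =>
    intro i
    have e2 : i + (d + 1) + 2 = i + d + 3 := by omega
    have e1 : i + (d + 1) + 1 = i + d + 2 := by omega
    rw [e1, e2]
    rcases eq_or_lt_of_le (h0 (i + 1)) with hz | hpos
    · have hz' : a (i + 1) = 0 := hz.symm
      have hzz : a i * a (i + d + 3) = 0 := by
        by_contra hne
        have hai : a i ≠ 0 := fun h => hne (by rw [h, zero_mul])
        have hak : a (i + d + 3) ≠ 0 := fun h => hne (by rw [h, mul_zero])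
        exact (hniz i (i + 1) (i + d + 3) (by omega) (by omega) hai hak) hz'
      rw [hzz]
      exact mul_nonneg (h0 _) (h0 _)
    · have c1 := ih (i + 1)
      have e3 : i + 1 + d + 2 = i + d + 3 := by omega
      have e4 : i + 1 + d + 1 = i + d + 2 := by omega
      have e5 : i + 1 + 1 = i + 2 := by omega
      rw [e3, e4, e5] at c1
      have c2 := hlc i
      refine le_of_mul_le_mul_right ?_ hpos
      calc a i * a (i + d + 3) * a (i + 1)
          = a i * (a (i + 1) * a (i + d + 3)) := by ring
        _ ≤ a i * (a (i + 2) * a (i + d + 2)) := by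
            exact mul_le_mul_of_nonneg_left c1 (h0 i)
        _ = (a i * a (i + 2)) * a (i + d + 2) := by ring
        _ ≤ (a (i + 1) * a (i + 1)) * a (i + d + 2) := by
            exact mul_le_mul_of_nonneg_right c2 (h0 _)
        _ = a (i + 1) * a (i + d + 2) * a (i + 1) := by ring

lemma coeff_comp_one_add_X (f : Polynomial ℝ) (r : ℕ) :
    (f.comp (1 + Polynomial.X)).coeff r
      = ∑ j ∈ range (f.natDegree + 1), (Nat.choose j r : ℝ) * f.coeff j := by
  rw [Polynomial.comp, Polynomial.eval₂_eq_sum_range, Polynomial.finset_sum_coeff]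
  refine Finset.sum_congr rfl fun j hj => ?_
  rw [Polynomial.coeff_C_mul, Polynomial.coeff_one_add_X_pow]
  ring

def wfun (k s i : ℕ) : ℝ :=
  ((Nat.choose i (k+1) * Nat.choose (s - i) (k+1) : ℕ) : ℝ)
    - ((Nat.choose i k * Nat.choose (s - i) (k+2) : ℕ) : ℝ)

def Gfun (a : ℕ → ℝ) (k : ℕ) (p : ℕ × ℕ) : ℝ :=
  (a p.1 * a p.2) *
    (((Nat.choose p.1 (k+1) * Nat.choose p.2 (k+1) : ℕ) : ℝ)
      - ((Nat.choose p.1 k * Nat.choose p.2 (k+2) : ℕ) : ℝ))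

lemma Q_nonneg' (s k t : ℕ) (ht : 2 * t ≤ s + 1) :
    (0:ℝ) ≤ ∑ i ∈ Icc t (s - t), wfun k s i := Q_nonneg s k t ht

lemma Gfun_eq (a : ℕ → ℝ) (k s i : ℕ) :
    Gfun a k (i, s - i) = (a i * a (s - i)) * wfun k s i := rfl


/-- If `f` has nonnegative, log-concave coefficients with no internal zeros, then the shifted
polynomial `f(1 + x)` also has log-concave coefficients. -/
theorem logConcave_shift (f : Polynomial ℝ) (hnonneg : ∀ i, 0 ≤ f.coeff i)
    (hlc : PolyLogConcaveR f) (hniz : NoInternalZeros f) :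
    PolyLogConcaveR (f.comp (1 + X)) := by
  intro k
  classical
  set M : ℕ := f.natDegree + 1 with hM
  set a : ℕ → ℝ := fun i => f.coeff i with ha
  have hb : ∀ r, (f.comp (1 + Polynomial.X)).coeff r
      = ∑ j ∈ range M, (Nat.choose j r : ℝ) * a j := fun r => coeff_comp_one_add_X f r
  have h0' : ∀ i, 0 ≤ a i := hnonneg
  have hlc' : ∀ i, a i * a (i + 2) ≤ a (i + 1) * a (i + 1) := by
    intro i; have h := hlc i; rwa [pow_two] at h
  have hniz' : ∀ i j l, i < j → j < l → a i ≠ 0 → a l ≠ 0 → a j ≠ 0 := hniz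
  have hmono := mono_aux a h0' hlc' hniz'
  -- each antidiagonal contributes nonnegatively
  have Ssum : ∀ s : ℕ, 0 ≤ ∑ i ∈ range (s + 1), (a i * a (s - i)) * wfun k s i := by
    intro s
    refine abel_aux s (fun i => a i * a (s - i)) (wfun k s) ?_ ?_ ?_ ?_
    · intro t; exact mul_nonneg (h0' t) (h0' _)
    · intro t hts
      have hss : s - (s - t) = t := by omega
      rw [hss, mul_comm]
    · intro t h2t
      rcases eq_or_lt_of_le h2t with heq | hlt
      · have hs1 : s - t = t + 1 := by omega
        have hs2 : s - (t + 1) = t := by omega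
        rw [hs1, hs2, mul_comm]
      · obtain ⟨d, hd1, hd2⟩ : ∃ d, s - t = t + d + 2 ∧ s - (t + 1) = t + d + 1 :=
          ⟨s - 2 * t - 2, by omega, by omega⟩
        rw [hd1, hd2]
        exact hmono d t
    · intro t h2t
      exact Q_nonneg' s k t h2t
  -- the quadratic form identity
  have e1 : (∑ j ∈ range M, (Nat.choose j (k+1) : ℝ) * a j)
        * (∑ j ∈ range M, (Nat.choose j (k+1) : ℝ) * a j)
      - (∑ j ∈ range M, (Nat.choose j k : ℝ) * a j)
        * (∑ j ∈ range M, (Nat.choose j (k+2) : ℝ) * a j)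
      = ∑ p ∈ range M ×ˢ range M, Gfun a k p := by
    rw [Finset.sum_product' (range M) (range M) (fun i j => Gfun a k (i, j))]
    rw [Finset.sum_mul_sum, Finset.sum_mul_sum, ← Finset.sum_sub_distrib]
    refine Finset.sum_congr rfl fun i _ => ?_
    rw [← Finset.sum_sub_distrib]
    refine Finset.sum_congr rfl fun j _ => ?_
    unfold Gfun
    push_cast
    ring
  have hmaps : ∀ p ∈ range M ×ˢ range M, p.1 + p.2 ∈ range (2 * M) := by
    intro p hp
    rw [Finset.mem_product, Finset.mem_range, Finset.mem_range] at hp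
    rw [Finset.mem_range]; omega
  have e2 : ∑ s ∈ range (2 * M),
        ∑ p ∈ (range M ×ˢ range M).filter (fun p => p.1 + p.2 = s), Gfun a k p
      = ∑ p ∈ range M ×ˢ range M, Gfun a k p :=
    Finset.sum_fiberwise_of_maps_to hmaps (Gfun a k)
  have e3 : ∀ s : ℕ, ∑ p ∈ (range M ×ˢ range M).filter (fun p => p.1 + p.2 = s), Gfun a k p
      = ∑ i ∈ range (s + 1), (a i * a (s - i)) * wfun k s i := by
    intro s
    have hinj : ∀ x ∈ range (s+1), ∀ y ∈ range (s+1),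
        (fun i => (i, s - i)) x = (fun i => (i, s - i)) y → x = y := by
      intro x _ y _ hxy
      exact congrArg Prod.fst hxy
    have himg : ∑ p ∈ (range (s+1)).image (fun i => (i, s - i)), Gfun a k p
        = ∑ i ∈ range (s+1), Gfun a k (i, s - i) := Finset.sum_image hinj
    have hsub : (range M ×ˢ range M).filter (fun p => p.1 + p.2 = s)
        ⊆ (range (s+1)).image (fun i => (i, s - i)) := by
      intro p hp
      rw [Finset.mem_filter, Finset.mem_product, Finset.mem_range, Finset.mem_range] at hp
      rw [Finset.mem_image]
      refine ⟨p.1, Finset.mem_range.mpr (by omega), ?_⟩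
      have h' : s - p.1 = p.2 := by omega
      rw [h']
    have hvanish : ∀ p ∈ (range (s+1)).image (fun i => (i, s - i)),
        p ∉ (range M ×ˢ range M).filter (fun p => p.1 + p.2 = s) → Gfun a k p = 0 := by
      intro p hp hnp
      rw [Finset.mem_image] at hp
      obtain ⟨i, hi, rfl⟩ := hp
      rw [Finset.mem_range] at hi
      rw [Finset.mem_filter, Finset.mem_product, Finset.mem_range, Finset.mem_range] at hnp
      have hA : ¬(i < M ∧ s - i < M) := by
        intro hA; exact hnp ⟨hA, by omega⟩
      have hiz : M ≤ i ∨ M ≤ s - i := by omega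
      have hzero : a i = 0 ∨ a (s - i) = 0 := by
        rcases hiz with h | h
        · left; exact Polynomial.coeff_eq_zero_of_natDegree_lt (by omega)
        · right; exact Polynomial.coeff_eq_zero_of_natDegree_lt (by omega)
      unfold Gfun
      rcases hzero with h | h <;> rw [h] <;> ring
    rw [← Finset.sum_subset hsub hvanish] at himg
    rw [himg]
    rfl
  have big : 0 ≤ (f.comp (1 + Polynomial.X)).coeff (k+1) * (f.comp (1 + Polynomial.X)).coeff (k+1)
      - (f.comp (1 + Polynomial.X)).coeff k * (f.comp (1 + Polynomial.X)).coeff (k+2) := by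
    rw [hb, hb, hb, e1, ← e2]
    refine Finset.sum_nonneg fun s _ => ?_
    rw [e3 s]
    exact Ssum s
  rw [pow_two]
  linarith
end

section
/- If a matroid M is representable over a field F, then its dual matroid M^⊥ is also representable over F. -/
/-!
Let `v` represent `M` on its finite ground set `E` and let `K ⊆ F^E` be the space of linear
relations among the vectors `v e`. The coordinate functionals `x ↦ x e` on `K` represent `M✶`:
those indexed by `I` are linearly independent iff every `v i` with `i ∈ I` lies in the span of
`v '' (E \ I)` (a relation `∑ c i • (x ↦ x i) = 0` on `K` is a functional on `W` vanishing on
`v '' (E \ I)`), i.e. iff `E \ I` is spanning in `M`, i.e. iff `I` is coindependent.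
-/

/-- A matroid `M` is representable over a field `F` if there is a map from its ground set to a
vector space over `F` such that a subset of the ground set is independent in `M` if and only if
the corresponding family of vectors is linearly independent. -/
def RepresentableOver {α : Type} (M : Matroid α) (F : Type) [Field F] : Prop :=
  ∃ (W : Type) (_ : AddCommGroup W) (_ : Module F W) (v : α → W),
    ∀ I : Set α, M.Indep I ↔ I ⊆ M.E ∧ LinearIndependent F (fun i : I => v i)

open Set Submodule Module

lemma linearIndepOn_extend_image_iff {ι ι' R M : Type*} [Semiring R] [AddCommMonoid M]
    [Module R M] {f : ι → ι'} (hf : f.Injective) (g : ι → M) (e : ι' → M) (s : Set ι) :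
    LinearIndepOn R (Function.extend f g e) (f '' s) ↔ LinearIndepOn R g s := by
  nth_rw 2 [← Function.extend_comp hf g e]
  exact ⟨fun h => h.comp_of_image hf.injOn, fun h => h.image_of_comp _ _⟩

section KerCoord

variable {ι F W : Type*} [Field F] [AddCommGroup W] [Module F W]

variable (F) in
noncomputable def kerCoord (v : ι → W) (i : ι) :
    Dual F (LinearMap.ker (Finsupp.linearCombination F v)) :=
  Finsupp.lapply i ∘ₗ Submodule.subtype _

@[simp]
lemma kerCoord_apply (v : ι → W) (i : ι) (x : LinearMap.ker (Finsupp.linearCombination F v)) :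
    kerCoord F v i x = (x : ι →₀ F) i :=
  rfl

variable {v : ι → W} {J : Set ι} {j : ι}

lemma exists_mem_ker_eqOn_single (hj : v j ∈ span F (v '' Jᶜ)) :
    ∃ x ∈ LinearMap.ker (Finsupp.linearCombination F v), EqOn x (Finsupp.single j 1) J := by
  obtain ⟨l, hl, hlv⟩ := (Finsupp.mem_span_image_iff_linearCombination F).mp hj
  refine ⟨Finsupp.single j 1 - l, by simp [hlv], fun i hi => ?_⟩
  simp [(Finsupp.mem_supported' F l).mp hl i (not_not_intro hi)]

lemma linearIndepOn_kerCoord_of_forall_mem_span (h : ∀ j ∈ J, v j ∈ span F (v '' Jᶜ)) :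
    LinearIndepOn F (kerCoord F v) J := by
  choose x hxK hx using fun j : J => exists_mem_ker_eqOn_single (h j j.2)
  refine LinearIndependent.of_pairwise_dual_eq_zero_one _
    (fun i => Dual.eval F _ ⟨x i, hxK i⟩) (fun i j hij => ?_) (fun i => ?_)
  · simp [hx i j.2, Subtype.coe_injective.ne hij]
  · simp [hx i i.2]

lemma mem_span_compl_of_linearIndepOn_kerCoord [Finite ι]
    (hJ : LinearIndepOn F (kerCoord F v) J) (hj : j ∈ J) : v j ∈ span F (v '' Jᶜ) := by
  classical
  have := Fintype.ofFinite ι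
  by_contra hvj
  obtain ⟨φ, hφj, hφ⟩ := exists_dual_map_eq_bot_of_notMem hvj inferInstance
  have hφJ : ∀ i ∉ J, φ (v i) = 0 := fun i hi =>
    (Submodule.eq_bot_iff _).mp hφ _ (mem_map_of_mem (subset_span ⟨i, hi, rfl⟩))
  have hrel : ∑ i ∈ J.toFinset, φ (v i) • kerCoord F v i = 0 := by
    ext x
    rw [LinearMap.sum_apply]
    simp only [LinearMap.smul_apply, kerCoord_apply, smul_eq_mul, LinearMap.zero_apply]
    calc ∑ i ∈ J.toFinset, φ (v i) * (x : ι →₀ F) i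
        = ∑ i, (x : ι →₀ F) i * φ (v i) := by
          refine Finset.sum_subset (Finset.subset_univ _) (fun i _ hi => ?_) |>.trans ?_
          · simp [hφJ i (by simpa using hi)]
          · simp [mul_comm]
      _ = φ (Finsupp.linearCombination F v x) := by
          rw [Finsupp.linearCombination_apply, Finsupp.sum_fintype _ _ (by simp), map_sum]
          simp
      _ = 0 := by rw [x.2, map_zero]
  exact hφj (linearIndepOn_iff'.mp hJ _ _ (by simp) hrel j (by simpa))

lemma linearIndepOn_kerCoord_iff [Finite ι] :
    LinearIndepOn F (kerCoord F v) J ↔ ∀ j ∈ J, v j ∈ span F (v '' Jᶜ) :=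
  ⟨fun hJ _ hj => mem_span_compl_of_linearIndepOn_kerCoord hJ hj,
    linearIndepOn_kerCoord_of_forall_mem_span⟩

end KerCoord

namespace Matroid

variable {α F W : Type*} [Field F] [AddCommGroup W] [Module F W]

variable (F) in
def IsRepresentation (M : Matroid α) (v : α → W) : Prop :=
  ∀ I, M.Indep I ↔ I ⊆ M.E ∧ LinearIndepOn F v I

namespace IsRepresentation

variable {M : Matroid α} {v : α → W} {B X I : Set α} {e : α}

lemma mem_closure_iff_of_indep (hv : M.IsRepresentation F v) (hB : M.Indep B) (he : e ∈ M.E) :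
    e ∈ M.closure B ↔ v e ∈ span F (v '' B) := by
  obtain ⟨hBE, hBli⟩ := (hv B).mp hB
  have hins : M.Indep (insert e B) ↔ (v e ∈ span F (v '' B) → e ∈ B) := by
    rw [hv, insert_subset_iff, linearIndepOn_insert_iff]
    tauto
  have hmem : e ∈ B → v e ∈ span F (v '' B) := fun heB => subset_span (mem_image_of_mem v heB)
  rw [hB.mem_closure_iff', hins]
  tauto

lemma mem_closure_iff (hv : M.IsRepresentation F v) (hX : X ⊆ M.E) (he : e ∈ M.E) :
    e ∈ M.closure X ↔ v e ∈ span F (v '' X) := by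
  obtain ⟨B, hB⟩ := M.exists_isBasis X hX
  have hspan : span F (v '' B) = span F (v '' X) := by
    refine le_antisymm (span_mono (image_mono hB.subset)) (span_le.mpr ?_)
    rintro _ ⟨x, hx, rfl⟩
    exact (hv.mem_closure_iff_of_indep hB.indep (hX hx)).mp (hB.subset_closure hx)
  rw [← hB.closure_eq_closure, hv.mem_closure_iff_of_indep hB.indep he, hspan]

lemma coindep_iff (hv : M.IsRepresentation F v) (hI : I ⊆ M.E) :
    M.Coindep I ↔ ∀ i ∈ I, v i ∈ span F (v '' (M.E \ I)) := by
  rw [coindep_iff_compl_spanning hI, spanning_iff_ground_subset_closure sdiff_subset]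
  refine ⟨fun h i hi => (hv.mem_closure_iff sdiff_subset (hI hi)).mp (h (hI hi)),
    fun h e he => ?_⟩
  by_cases heI : e ∈ I
  · exact (hv.mem_closure_iff sdiff_subset he).mpr (h e heI)
  · exact M.subset_closure _ sdiff_subset ⟨he, heI⟩

lemma dual [M.Finite] (hv : M.IsRepresentation F v) :
    M✶.IsRepresentation F
      (Function.extend Subtype.val (kerCoord F (v ∘ Subtype.val : M.E → W)) 0) := by
  have := M.ground_finite.to_subtype
  intro I
  by_cases hI : I ⊆ M.E
  swap
  · exact iff_of_false (fun h => hI h.subset_ground) (fun h => hI h.1)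
  obtain ⟨J, rfl⟩ : ∃ J : Set M.E, Subtype.val '' J = I :=
    ⟨_, by rw [Subtype.image_preimage_coe, inter_eq_right.mpr hI]⟩
  rw [← coindep_def, hv.coindep_iff hI, dual_ground, and_iff_right hI,
    linearIndepOn_extend_image_iff Subtype.val_injective, linearIndepOn_kerCoord_iff,
    image_comp, image_val_compl, forall_mem_image]
  rfl

end IsRepresentation

end Matroid

/-- If a (finite) matroid `M` is representable over a field `F`, then its dual matroid `M✶`
is also representable over `F`. -/
theorem dual_representable {α : Type} (M : Matroid α) [M.Finite] (F : Type) [Field F]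
    (h : RepresentableOver M F) : RepresentableOver M✶ F := by
  obtain ⟨W, _, _, v, hv⟩ := h
  exact ⟨_, _, _, _, Matroid.IsRepresentation.dual hv⟩
end

section
/- Let C_n(x) = Σ_G x^{e(G)}, summing over all labeled connected simple graphs G on n vertices, where e(G) is the number of edges. Then C_n(x) = x^{n−1} I_n(1+x), where I_n is the inversion enumerator of labeled trees on n vertices. -/
/-- The number of inversions of a labeled tree on vertex set `{0, 1, ..., n}`:
pairs `(i, j)` with `0 < i < j` such that `j` lies on the (unique) path from `i` to `0`. -/
noncomputable def treeInv {n : ℕ} (T : SimpleGraph (Fin (n + 1))) : ℕ :=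
  Nat.card {p : Fin (n + 1) × Fin (n + 1) //
    0 < p.1 ∧ p.1 < p.2 ∧ ∀ w : T.Walk p.1 0, w.IsPath → p.2 ∈ w.support}

open scoped Classical in
/-- The inversion enumerator `I_{n+1}(y) = Σ_{T ∈ LT_{n+1}} y^{inv T}` of labeled trees
on the vertex set `{0, 1, ..., n}`. -/
noncomputable def invPoly (n : ℕ) : Polynomial ℤ :=
  ∑ᶠ T : {G : SimpleGraph (Fin (n + 1)) // G.IsTree}, (Polynomial.X : Polynomial ℤ) ^ treeInv T.1

open scoped Classical in
/-- The edge enumerator of labeled connected simple graphs on `n` vertices. -/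
noncomputable def connPoly (n : ℕ) : Polynomial ℤ :=
  ∑ᶠ G : {G : SimpleGraph (Fin n) // G.Connected}, (Polynomial.X : Polynomial ℤ) ^ G.1.edgeFinset.card


/-!
Encode a tree on `{0, …, n}` rooted at `0` by its parent map `p`. For a connected graph `G`,
depth-first search from `0` that always moves to the largest unvisited neighbour yields a spanning
tree `t` such that every other edge of `G` is `{i, p j}` for an inversion `(i, j)` of `t`.
Conversely, adding to `t` the edges `{i, p j}` of any set `S` of inversions gives a connected graph
whose search tree is again `t`, and these edges are distinct from each other and from the tree
edges. So connected graphs correspond to pairs `(t, S)`, with `n + |S|` edges, and summing over `S`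
gives `x ^ n (1 + x) ^ inv t` for each `t`.
-/

open Function SimpleGraph Polynomial

lemma List.exists_iterate_eq_of_isChain {α : Type*} {f : α → α} {u : α} {l : List α}
    (hl : (u :: l).IsChain fun a b => f a = b) {w : α} (hw : w ∈ u :: l) :
    ∃ k, f^[k] u = w := by
  obtain ⟨i, hi, rfl⟩ := List.mem_iff_getElem.mp hw
  exact ⟨i, hl.iterate_eq_of_apply_eq i hi⟩

lemma List.apply_mem_of_isChain {α : Type*} {f : α → α} {l : List α}
    (hl : l.IsChain fun a b => f a = b) (hlast : ∀ h : l ≠ [], f (l.getLast h) = l.getLast h)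
    {v : α} (hv : v ∈ l) : f v ∈ l := by
  induction l with
  | nil => simp at hv
  | cons x l ih =>
    rcases l with _ | ⟨y, l⟩
    · rw [List.mem_singleton] at hv ⊢
      subst hv
      exact hlast (List.cons_ne_nil _ _)
    · rcases List.mem_cons.mp hv with rfl | hv
      · simp [List.isChain_cons_cons.mp hl]
      · refine List.mem_cons_of_mem _ (ih (List.isChain_cons_cons.mp hl).2 (fun _ => ?_) hv)
        simpa using hlast (List.cons_ne_nil _ _)

lemma List.exists_rel_of_isChain_of_mem {α : Type*} {R : α → α → Prop} {x b : α} {l : List α}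
    (hl : (x :: l).IsChain R) (hb : b ∈ l) : ∃ w ∈ x :: l, R w b := by
  induction l generalizing x with
  | nil => simp at hb
  | cons y l ih =>
    rcases List.mem_cons.mp hb with rfl | hb
    · exact ⟨x, List.mem_cons_self, (List.isChain_cons_cons.mp hl).1⟩
    · obtain ⟨w, hw, hR⟩ := ih (List.isChain_cons_cons.mp hl).2 hb
      exact ⟨w, List.mem_cons_of_mem _ hw, hR⟩

lemma Set.EqOn.iterate_of_mapsTo {α : Type*} {f g : α → α} {s : Set α} (h : Set.EqOn f g s)
    (hg : Set.MapsTo g s s) (k : ℕ) : Set.EqOn f^[k] g^[k] s := by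
  induction k with
  | zero => exact fun _ _ => rfl
  | succ k ih =>
    intro x hx
    rw [iterate_succ_apply', iterate_succ_apply', ih hx]
    exact h (hg.iterate k hx)

def IsDfsEdge {α : Type*} [LT α] (par : α → α) (a b : α) : Prop :=
  par a = b ∨ ∃ w, par w = b ∧ (∃ k, par^[k] a = w) ∧ a < w

lemma IsDfsEdge.of_eqOn {α : Type*} [LT α] {f g : α → α} {s : Set α} {a b : α}
    (hfg : Set.EqOn f g s) (hg : Set.MapsTo g s s) (ha : a ∈ s) (h : IsDfsEdge g a b) :
    IsDfsEdge f a b := by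
  rcases h with h | ⟨w, hw, ⟨k, hk⟩, haw⟩
  · exact Or.inl (by rw [hfg ha, h])
  · refine Or.inr ⟨w, ?_, ⟨k, by rw [hfg.iterate_of_mapsTo hg k ha, hk]⟩, haw⟩
    rw [hfg (hk ▸ hg.iterate k ha), hw]

namespace SimpleGraph.IsTree

variable {V : Type*} {G : SimpleGraph V} (hG : G.IsTree)

noncomputable def path (u v : V) : G.Walk u v := (hG.existsUnique_path u v).exists.choose

lemma isPath_path (u v : V) : (hG.path u v).IsPath :=
  (hG.existsUnique_path u v).exists.choose_spec

variable {hG} in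
lemma eq_path {u v : V} {w : G.Walk u v} (hw : w.IsPath) : w = hG.path u v :=
  (hG.existsUnique_path u v).unique hw (hG.isPath_path u v)

noncomputable def parent (r v : V) : V := (hG.path v r).snd

lemma parent_root (r : V) : hG.parent r r = r := by
  have : (hG.path r r).Nil := Walk.isPath_iff_nil.mp (hG.isPath_path r r)
  rw [parent, this.eq_nil]
  rfl

lemma adj_parent {r v : V} (hv : v ≠ r) : G.Adj v (hG.parent r v) :=
  Walk.adj_snd (Walk.not_nil_of_ne hv)

lemma iterate_parent_length (r v : V) : (hG.parent r)^[(hG.path v r).length] v = r := by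
  induction h : (hG.path v r).length generalizing v with
  | zero => exact Walk.eq_of_length_eq_zero h
  | succ k ih =>
    have hnil : ¬ (hG.path v r).Nil := by simp [← Walk.length_eq_zero_iff, h]
    rw [iterate_succ_apply]
    apply ih
    show (hG.path (hG.path v r).snd r).length = k
    rw [← eq_path (hG.isPath_path v r).tail]
    have := Walk.length_tail_add_one hnil
    omega

end SimpleGraph.IsTree

/-- Rooted trees on `Fin (n + 1)` with root `0`, encoded by their parent map. -/
def RTree (n : ℕ) := {p : Fin (n + 1) → Fin (n + 1) // p 0 = 0 ∧ ∀ v, ∃ k, p^[k] v = 0}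

open scoped Classical in
noncomputable instance {n : ℕ} : Fintype (RTree n) := Subtype.fintype _

namespace RTree

variable {n : ℕ}

section Depth

variable (t : RTree n)

def parent : Fin (n + 1) → Fin (n + 1) := t.1

lemma parent_zero : t.parent 0 = 0 := t.2.1

noncomputable def depth (v : Fin (n + 1)) : ℕ := Nat.find (t.2.2 v)

lemma iterate_depth (v : Fin (n + 1)) : t.parent^[t.depth v] v = 0 := Nat.find_spec (t.2.2 v)

variable {t}

lemma iterate_eq_zero_iff {v : Fin (n + 1)} {k : ℕ} : t.parent^[k] v = 0 ↔ t.depth v ≤ k := by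
  refine ⟨fun h => Nat.find_le h, fun h => ?_⟩
  rw [← Nat.sub_add_cancel h, iterate_add_apply, iterate_depth]
  exact iterate_fixed t.parent_zero _

lemma depth_eq_zero_iff {v : Fin (n + 1)} : t.depth v = 0 ↔ v = 0 := by
  simpa using (iterate_eq_zero_iff (t := t) (v := v) (k := 0)).symm

lemma depth_pos_iff {v : Fin (n + 1)} : 0 < t.depth v ↔ v ≠ 0 := by
  rw [Nat.pos_iff_ne_zero, Ne, depth_eq_zero_iff]

lemma depth_parent (v : Fin (n + 1)) : t.depth (t.parent v) = t.depth v - 1 := by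
  refine le_antisymm ?_ ?_
  · rcases eq_or_ne v 0 with rfl | hv
    · simp [parent_zero, depth_eq_zero_iff.mpr]
    · rw [← iterate_eq_zero_iff, ← iterate_succ_apply, Nat.succ_eq_add_one,
        Nat.sub_one_add_one (depth_pos_iff.mpr hv).ne']
      exact t.iterate_depth v
  · rw [Nat.sub_le_iff_le_add, ← iterate_eq_zero_iff, iterate_succ_apply]
    exact t.iterate_depth _

lemma depth_parent_lt {v : Fin (n + 1)} (hv : v ≠ 0) : t.depth (t.parent v) < t.depth v := by
  have := depth_pos_iff (t := t) |>.mpr hv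
  rw [depth_parent]
  omega

lemma depth_iterate (v : Fin (n + 1)) (k : ℕ) : t.depth (t.parent^[k] v) = t.depth v - k := by
  induction k with
  | zero => rfl
  | succ k ih => rw [iterate_succ_apply', depth_parent, ih, Nat.sub_sub]

end Depth

section Ancestor

def IsAncestor (t : RTree n) (j i : Fin (n + 1)) : Prop := ∃ k, t.parent^[k] i = j

variable {t : RTree n} {i j : Fin (n + 1)}

lemma IsAncestor.refl (t : RTree n) (v : Fin (n + 1)) : t.IsAncestor v v := ⟨0, rfl⟩

lemma IsAncestor.eq_iterate (h : t.IsAncestor j i) : j = t.parent^[t.depth i - t.depth j] i := by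
  obtain ⟨k, rfl⟩ := h
  rcases le_or_gt k (t.depth i) with hk | hk
  · rw [depth_iterate, Nat.sub_sub_self hk]
  · rw [iterate_eq_zero_iff.mpr hk.le, depth_eq_zero_iff.mpr rfl, Nat.sub_zero, iterate_depth]

lemma IsAncestor.depth_le (h : t.IsAncestor j i) : t.depth j ≤ t.depth i := by
  obtain ⟨k, rfl⟩ := h
  rw [depth_iterate]
  exact Nat.sub_le _ _

lemma IsAncestor.depth_lt (h : t.IsAncestor j i) (hne : j ≠ i) : t.depth j < t.depth i :=
  h.depth_le.lt_of_ne fun hd => hne (by rw [h.eq_iterate, hd, Nat.sub_self, iterate_zero_apply])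

lemma IsAncestor.eq_of_depth_eq {j' : Fin (n + 1)} (h : t.IsAncestor j i)
    (h' : t.IsAncestor j' i) (hd : t.depth j = t.depth j') : j = j' := by
  rw [h.eq_iterate, h'.eq_iterate, hd]

lemma isAncestor_zero_iff : t.IsAncestor j 0 ↔ j = 0 :=
  ⟨fun ⟨k, hk⟩ => hk ▸ iterate_fixed t.parent_zero k, fun h => h ▸ IsAncestor.refl t 0⟩

lemma isAncestor_iff_eq_or_isAncestor_parent :
    t.IsAncestor j i ↔ j = i ∨ t.IsAncestor j (t.parent i) := by
  constructor
  · rintro ⟨_ | k, hk⟩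
    exacts [Or.inl hk.symm, Or.inr ⟨k, hk⟩]
  · rintro (rfl | ⟨k, hk⟩)
    exacts [IsAncestor.refl t j, ⟨k + 1, hk⟩]

end Ancestor

section Inversion

variable {t : RTree n}

def IsInversion (t : RTree n) (q : Fin (n + 1) × Fin (n + 1)) : Prop :=
  0 < q.1 ∧ q.1 < q.2 ∧ t.IsAncestor q.2 q.1

abbrev Inversion (t : RTree n) := {q : Fin (n + 1) × Fin (n + 1) // t.IsInversion q}

lemma IsInversion.depth_snd_pos {q : Fin (n + 1) × Fin (n + 1)} (hq : t.IsInversion q) :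
    0 < t.depth q.2 :=
  depth_pos_iff.mpr (hq.1.trans hq.2.1).ne'

lemma IsInversion.depth_lt {q : Fin (n + 1) × Fin (n + 1)} (hq : t.IsInversion q) :
    t.depth q.2 < t.depth q.1 :=
  hq.2.2.depth_lt hq.2.1.ne'

lemma isInversion_of_isAncestor {i j : Fin (n + 1)} (hij : i < j) (h : t.IsAncestor j i) :
    t.IsInversion (i, j) := by
  refine ⟨Fin.pos_iff_ne_zero.mpr fun hi => ?_, hij, h⟩
  subst hi
  exact absurd (isAncestor_zero_iff.mp h ▸ hij) (Fin.not_lt_zero _)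

lemma treeEdge_injOn : Set.InjOn (fun v => s(v, t.parent v)) {0}ᶜ := by
  intro v hv w hw h
  rcases Sym2.eq_iff.mp h with ⟨h, -⟩ | ⟨hvw, hwv⟩
  · exact h
  · have := depth_parent_lt (t := t) hv
    have := depth_parent_lt (t := t) hw
    have := congrArg t.depth hvw
    have := congrArg t.depth hwv
    omega

lemma inversionEdge_injective : Injective fun q : t.Inversion => s(q.1.1, t.parent q.1.2) := by
  intro q q' h
  have := t.depth_parent q.1.2
  have := t.depth_parent q'.1.2
  have := q.2.depth_lt
  have := q'.2.depth_lt
  have := q.2.depth_snd_pos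
  have := q'.2.depth_snd_pos
  rcases Sym2.eq_iff.mp h with ⟨hi, hj⟩ | ⟨hij', hji'⟩
  · have := congrArg t.depth hj
    refine Subtype.ext (Prod.ext hi (q.2.2.2.eq_of_depth_eq ?_ (by omega)))
    exact hi ▸ q'.2.2.2
  · have := congrArg t.depth hij'
    have := congrArg t.depth hji'
    omega

lemma treeEdge_ne_inversionEdge (v : Fin (n + 1)) (q : t.Inversion) :
    s(v, t.parent v) ≠ s(q.1.1, t.parent q.1.2) := by
  have := t.depth_parent q.1.1
  have := t.depth_parent q.1.2
  have := t.depth_parent (t.parent q.1.2)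
  have := q.2.depth_lt
  have := q.2.depth_snd_pos
  intro h
  rcases Sym2.eq_iff.mp h with ⟨rfl, h⟩ | ⟨rfl, h⟩ <;>
  · have := congrArg t.depth h
    omega

end Inversion

section Graph

variable {t : RTree n} {S : Finset t.Inversion}

def graph (t : RTree n) (S : Finset t.Inversion) : SimpleGraph (Fin (n + 1)) :=
  fromRel fun a b => (a ≠ 0 ∧ t.parent a = b) ∨ ∃ q ∈ S, a = q.1.1 ∧ b = t.parent q.1.2

lemma graph_mono {S S' : Finset t.Inversion} (h : S ⊆ S') : t.graph S ≤ t.graph S' := by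
  intro a b hab
  refine ⟨hab.1, hab.2.imp (Or.imp_right ?_) (Or.imp_right ?_)⟩ <;>
    exact fun ⟨q, hq, hq'⟩ => ⟨q, h hq, hq'⟩

lemma graph_adj_parent {v : Fin (n + 1)} (hv : v ≠ 0) : (t.graph S).Adj v (t.parent v) :=
  ⟨fun h => (depth_parent_lt (t := t) hv).ne (congrArg t.depth h).symm, Or.inl (Or.inl ⟨hv, rfl⟩)⟩

lemma graph_adj_inversion {q : t.Inversion} (hq : q ∈ S) :
    (t.graph S).Adj q.1.1 (t.parent q.1.2) := by
  refine ⟨fun h => ?_, Or.inl (Or.inr ⟨q, hq, rfl, rfl⟩)⟩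
  have := t.depth_parent q.1.2
  have := q.2.depth_lt
  have := congrArg t.depth h
  omega

noncomputable def pathToRoot (t : RTree n) (v : Fin (n + 1)) : (t.graph ∅).Walk v 0 :=
  if h : v = 0 then Walk.nil.copy h.symm rfl
  else Walk.cons (graph_adj_parent h) (t.pathToRoot (t.parent v))
termination_by t.depth v
decreasing_by exact depth_parent_lt h

lemma mem_support_pathToRoot {v j : Fin (n + 1)} :
    j ∈ (t.pathToRoot v).support ↔ t.IsAncestor j v := by
  induction v using pathToRoot.induct t with
  | case1 =>
    rw [pathToRoot]
    simp [isAncestor_zero_iff]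
  | case2 v hv ih =>
    rw [pathToRoot, dif_neg hv, Walk.support_cons, List.mem_cons, ih]
    exact isAncestor_iff_eq_or_isAncestor_parent.symm

lemma isPath_pathToRoot (v : Fin (n + 1)) : (t.pathToRoot v).IsPath := by
  induction v using pathToRoot.induct t with
  | case1 =>
    rw [pathToRoot]
    simp
  | case2 v hv ih =>
    rw [pathToRoot, dif_neg hv, Walk.cons_isPath_iff, mem_support_pathToRoot]
    exact ⟨ih, fun h => (depth_parent_lt hv).not_ge h.depth_le⟩

lemma graph_connected : (t.graph S).Connected := by
  refine .mono (graph_mono S.empty_subset) ((connected_iff _).mpr ⟨fun a b => ?_, ⟨0⟩⟩)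
  exact (t.pathToRoot a).reachable.trans (t.pathToRoot b).reachable.symm

lemma edgeFinset_graph [Fintype (t.graph S).edgeSet] :
    (t.graph S).edgeFinset = ({0}ᶜ : Finset _).image (fun v => s(v, t.parent v)) ∪
      S.image fun q => s(q.1.1, t.parent q.1.2) := by
  ext e
  induction e using Sym2.ind with
  | _ a b =>
    simp only [mem_edgeFinset, mem_edgeSet, Finset.mem_union, Finset.mem_image,
      Finset.mem_compl, Finset.mem_singleton]
    constructor
    · rintro ⟨-, (⟨ha, rfl⟩ | ⟨q, hq, rfl, rfl⟩) | (⟨hb, rfl⟩ | ⟨q, hq, rfl, rfl⟩)⟩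
      exacts [Or.inl ⟨a, ha, rfl⟩, Or.inr ⟨q, hq, rfl⟩, Or.inl ⟨b, hb, Sym2.eq_swap⟩,
        Or.inr ⟨q, hq, Sym2.eq_swap⟩]
    · rintro (⟨v, hv, he⟩ | ⟨q, hq, he⟩) <;> rw [← mem_edgeSet, ← he]
      exacts [graph_adj_parent hv, graph_adj_inversion hq]

lemma card_edgeFinset_graph [Fintype (t.graph S).edgeSet] :
    (t.graph S).edgeFinset.card = n + S.card := by
  rw [edgeFinset_graph, Finset.card_union_of_disjoint, Finset.card_image_of_injOn,
    Finset.card_image_of_injective _ inversionEdge_injective, Finset.card_compl,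
    Finset.card_singleton, Fintype.card_fin, Nat.add_sub_cancel]
  · simpa using treeEdge_injOn
  · simp only [Finset.disjoint_left, Finset.mem_image]
    rintro _ ⟨v, -, rfl⟩ ⟨q, -, h⟩
    exact treeEdge_ne_inversionEdge v q h.symm

lemma mem_iff_adj_graph {q : t.Inversion} : q ∈ S ↔ (t.graph S).Adj q.1.1 (t.parent q.1.2) := by
  classical
  rw [← mem_edgeSet, ← mem_edgeFinset, edgeFinset_graph, Finset.mem_union, Finset.mem_image,
    Finset.mem_image]
  refine ⟨fun hq => Or.inr ⟨q, hq, rfl⟩, ?_⟩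
  rintro (⟨v, -, hv⟩ | ⟨q', hq', h⟩)
  · exact absurd hv (treeEdge_ne_inversionEdge v q)
  · exact inversionEdge_injective h ▸ hq'

end Graph

section Tree

variable {t : RTree n}

lemma isTree_graph_empty (t : RTree n) : (t.graph ∅).IsTree := by
  classical
  refine isTree_iff_connected_and_card.mpr ⟨graph_connected, ?_⟩
  rw [Nat.card_eq_fintype_card, ← edgeFinset_card, card_edgeFinset_graph,
    Nat.card_eq_fintype_card, Fintype.card_fin, Finset.card_empty]

lemma eq_pathToRoot {v : Fin (n + 1)} {w : (t.graph ∅).Walk v 0} (hw : w.IsPath) :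
    w = t.pathToRoot v :=
  (t.isTree_graph_empty.existsUnique_path v 0).unique hw (isPath_pathToRoot v)

lemma treeInv_graph_empty : treeInv (t.graph ∅) = Nat.card t.Inversion := by
  refine Nat.card_congr (Equiv.subtypeEquivRight fun q =>
    and_congr_right fun _ => and_congr_right fun _ => ?_)
  rw [← mem_support_pathToRoot]
  refine ⟨fun h => h _ (isPath_pathToRoot _), fun h w hw => ?_⟩
  rwa [eq_pathToRoot hw]

lemma parent_isTree_graph_empty : t.isTree_graph_empty.parent 0 = t.parent := by
  funext v
  rw [IsTree.parent, eq_pathToRoot (IsTree.isPath_path _ v 0), pathToRoot]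
  split_ifs with hv
  · subst hv
    rw [parent_zero]
    rfl
  · exact Walk.snd_cons _ _

noncomputable def ofIsTree {G : SimpleGraph (Fin (n + 1))} (hG : G.IsTree) : RTree n :=
  ⟨hG.parent 0, hG.parent_root 0, fun v => ⟨_, hG.iterate_parent_length 0 v⟩⟩

lemma graph_empty_ofIsTree {G : SimpleGraph (Fin (n + 1))} (hG : G.IsTree) :
    (ofIsTree hG).graph ∅ = G := by
  refine (isTree_iff_minimal_connected.mp hG).eq_of_le graph_connected fun a b hab => ?_
  rcases hab.2 with (⟨ha, rfl⟩ | ⟨_, h, -⟩) | (⟨hb, rfl⟩ | ⟨_, h, -⟩)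
  · exact hG.adj_parent ha
  · exact absurd h (Finset.notMem_empty _)
  · exact (hG.adj_parent hb).symm
  · exact absurd h (Finset.notMem_empty _)

variable (n) in
noncomputable def equivIsTree : RTree n ≃ {G : SimpleGraph (Fin (n + 1)) // G.IsTree} where
  toFun t := ⟨t.graph ∅, t.isTree_graph_empty⟩
  invFun G := ofIsTree G.2
  left_inv _ := Subtype.ext parent_isTree_graph_empty
  right_inv G := Subtype.ext (graph_empty_ofIsTree G.2)

lemma equivIsTree_apply (t : RTree n) : (equivIsTree n t).1 = t.graph ∅ := rfl

end Tree

section DfsTree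

variable {t : RTree n} {G : SimpleGraph (Fin (n + 1))}

open scoped Classical in
/-- Characterises the search tree built by `SimpleGraph.dfs`, see `SimpleGraph.dfsTree_eq`. -/
def IsDfsTree (t : RTree n) (G : SimpleGraph (Fin (n + 1))) : Prop :=
  t.graph ∅ ≤ G ∧ G ≤ t.graph Finset.univ

lemma IsDfsTree.adj_parent (h : t.IsDfsTree G) {v : Fin (n + 1)} (hv : v ≠ 0) :
    G.Adj v (t.parent v) :=
  h.1 (graph_adj_parent hv)

lemma IsDfsTree.isDfsEdge (h : t.IsDfsTree G) {a b : Fin (n + 1)} (hab : G.Adj a b) :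
    IsDfsEdge t.parent a b ∨ IsDfsEdge t.parent b a := by
  rcases (h.2 hab).2 with (⟨-, h⟩ | ⟨q, -, rfl, rfl⟩) | (⟨-, h⟩ | ⟨q, -, rfl, rfl⟩)
  · exact Or.inl (Or.inl h)
  · exact Or.inl (Or.inr ⟨q.1.2, rfl, q.2.2.2, q.2.2.1⟩)
  · exact Or.inr (Or.inl h)
  · exact Or.inr (Or.inr ⟨q.1.2, rfl, q.2.2.2, q.2.2.1⟩)

lemma isDfsTree_of_isDfsEdge (hadj : ∀ v, v ≠ 0 → G.Adj v (t.parent v))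
    (hedges : ∀ a b, G.Adj a b → IsDfsEdge t.parent a b ∨ IsDfsEdge t.parent b a) :
    t.IsDfsTree G := by
  classical
  refine ⟨fun a b hab => ?_, fun a b hab => ⟨hab.ne, ?_⟩⟩
  · rcases hab.2 with (⟨ha, rfl⟩ | ⟨_, hq, -⟩) | (⟨hb, rfl⟩ | ⟨_, hq, -⟩)
    exacts [hadj a ha, absurd hq (Finset.notMem_empty _), (hadj b hb).symm,
      absurd hq (Finset.notMem_empty _)]
  have hne_zero {x y : Fin (n + 1)} (hxy : G.Adj x y) (h : t.parent x = y) : x ≠ 0 := by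
    rintro rfl
    exact hxy.ne (h ▸ t.parent_zero).symm
  rcases hedges a b hab with (h | ⟨w, rfl, hw, haw⟩) | (h | ⟨w, rfl, hw, hbw⟩)
  · exact Or.inl (Or.inl ⟨hne_zero hab h, h⟩)
  · exact Or.inl (Or.inr ⟨⟨_, isInversion_of_isAncestor haw hw⟩, Finset.mem_univ _, rfl, rfl⟩)
  · exact Or.inr (Or.inl ⟨hne_zero hab.symm h, h⟩)
  · exact Or.inr (Or.inr ⟨⟨_, isInversion_of_isAncestor hbw hw⟩, Finset.mem_univ _, rfl, rfl⟩)

lemma isDfsTree_graph (S : Finset t.Inversion) : t.IsDfsTree (t.graph S) := by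
  classical
  exact ⟨graph_mono S.empty_subset, graph_mono S.subset_univ⟩

open scoped Classical in
lemma IsDfsTree.graph_filter_adj (h : t.IsDfsTree G) :
    t.graph {q | G.Adj q.1.1 (t.parent q.1.2)} = G := by
  ext a b
  constructor
  · rintro ⟨-, (⟨ha, rfl⟩ | ⟨q, hq, rfl, rfl⟩) | (⟨hb, rfl⟩ | ⟨q, hq, rfl, rfl⟩)⟩
    · exact h.adj_parent ha
    · exact (Finset.mem_filter.mp hq).2
    · exact (h.adj_parent hb).symm
    · exact (Finset.mem_filter.mp hq).2.symm
  · intro hab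
    refine ⟨hab.ne, ?_⟩
    rcases (h.2 hab).2 with (h' | ⟨q, -, rfl, rfl⟩) | (h' | ⟨q, -, rfl, rfl⟩)
    · exact Or.inl (Or.inl h')
    · exact Or.inl (Or.inr ⟨q, Finset.mem_filter.mpr ⟨Finset.mem_univ _, hab⟩, rfl, rfl⟩)
    · exact Or.inr (Or.inl h')
    · exact Or.inr (Or.inr ⟨q, Finset.mem_filter.mpr ⟨Finset.mem_univ _, hab.symm⟩, rfl, rfl⟩)

end DfsTree

end RTree

namespace SimpleGraph

variable {n : ℕ} {G : SimpleGraph (Fin (n + 1))}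

open scoped Classical in
noncomputable def unvisitedNbrs (G : SimpleGraph (Fin (n + 1))) (u : Fin (n + 1))
    (vis : Finset (Fin (n + 1))) : Finset (Fin (n + 1)) :=
  {x | G.Adj u x ∧ x ∉ vis}

lemma mem_unvisitedNbrs {u x : Fin (n + 1)} {vis : Finset (Fin (n + 1))} :
    x ∈ G.unvisitedNbrs u vis ↔ G.Adj u x ∧ x ∉ vis := by
  simp [unvisitedNbrs]

noncomputable def dfs (G : SimpleGraph (Fin (n + 1))) :
    List (Fin (n + 1)) → Finset (Fin (n + 1)) → (Fin (n + 1) → Fin (n + 1)) →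
      (Fin (n + 1) → Fin (n + 1)) × Finset (Fin (n + 1))
  | [], vis, par => (par, vis)
  | u :: stack, vis, par =>
    if h : (G.unvisitedNbrs u vis).Nonempty then
      let v := (G.unvisitedNbrs u vis).max' h
      dfs G (v :: u :: stack) (insert v vis) (update par v u)
    else dfs G stack vis par
termination_by stack vis => 2 * visᶜ.card + stack.length
decreasing_by
  · have hv : (G.unvisitedNbrs u vis).max' h ∈ visᶜ :=
      Finset.mem_compl.mpr (mem_unvisitedNbrs.mp (Finset.max'_mem _ h)).2
    have := Finset.card_pos.mpr ⟨_, hv⟩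
    rw [Finset.compl_insert, Finset.card_erase_of_mem hv]
    simp only [List.length_cons]
    omega
  · simp only [List.length_cons]
    omega

structure DfsInv (G : SimpleGraph (Fin (n + 1))) (stack : List (Fin (n + 1)))
    (vis : Finset (Fin (n + 1))) (par : Fin (n + 1) → Fin (n + 1)) : Prop where
  par_zero : par 0 = 0
  zero_mem : 0 ∈ vis
  mapsTo : Set.MapsTo par vis vis
  adj_par : ∀ v ∈ vis, v ≠ 0 → G.Adj v (par v)
  reach : ∀ v ∈ vis, ∃ k, par^[k] v = 0
  stack_subset : ∀ v ∈ stack, v ∈ vis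
  chain : stack.IsChain fun a b => par a = b ∧ ∀ x ∉ vis, G.Adj b x → x < a
  getLast_eq : ∀ h : stack ≠ [], stack.getLast h = 0
  closed : ∀ w ∈ vis, w ∉ stack → ∀ x, G.Adj w x → x ∈ vis
  edges : ∀ a ∈ vis, ∀ b ∈ vis, G.Adj a b → IsDfsEdge par a b ∨ IsDfsEdge par b a

namespace DfsInv

variable {u v : Fin (n + 1)} {stack : List (Fin (n + 1))} {vis : Finset (Fin (n + 1))}
  {par : Fin (n + 1) → Fin (n + 1)}

lemma isChain_par (inv : DfsInv G stack vis par) : stack.IsChain fun a b => par a = b :=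
  inv.chain.imp fun _ _ h => h.1

lemma eqOn_update (hv : IsGreatest (G.unvisitedNbrs u vis : Set _) v) :
    Set.EqOn (update par v u) par vis :=
  fun _ hx => update_of_ne (ne_of_mem_of_not_mem hx (mem_unvisitedNbrs.mp hv.1).2) u par

lemma chain_push (inv : DfsInv G (u :: stack) vis par)
    (hv : IsGreatest (G.unvisitedNbrs u vis : Set _) v) :
    (v :: u :: stack).IsChain fun a b => update par v u a = b ∧
      ∀ x ∉ insert v vis, G.Adj b x → x < a := by
  refine List.IsChain.cons_cons ⟨update_self v u par, fun x hx hux => ?_⟩ ?_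
  · rw [Finset.mem_insert, not_or] at hx
    exact (hv.2 (mem_unvisitedNbrs.mpr ⟨hux, hx.2⟩)).lt_of_ne hx.1
  · refine inv.chain.imp_of_mem_imp fun a b ha _ hab => ⟨?_, fun x hx => hab.2 x (by simp_all)⟩
    rw [eqOn_update hv (inv.stack_subset a ha), hab.1]

lemma isDfsEdge_push (inv : DfsInv G (u :: stack) vis par)
    (hv : IsGreatest (G.unvisitedNbrs u vis : Set _) v) {c : Fin (n + 1)} (hc : c ∈ vis)
    (hcv : G.Adj c v) : IsDfsEdge (update par v u) v c := by
  -- visited vertices off the stack have no unvisited neighbours, so `c` is on the stack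
  have hcs : c ∈ u :: stack := by
    by_contra hcs
    exact (mem_unvisitedNbrs.mp hv.1).2 (inv.closed c hc hcs v hcv)
  rcases List.mem_cons.mp hcs with rfl | hcs
  · exact Or.inl (update_self v c par)
  · obtain ⟨w, hw, hwc⟩ := List.exists_rel_of_isChain_of_mem inv.chain hcs
    refine Or.inr ⟨w, by rw [eqOn_update hv (inv.stack_subset w hw), hwc.1], ?_,
      hwc.2 v (mem_unvisitedNbrs.mp hv.1).2 hcv⟩
    exact List.exists_iterate_eq_of_isChain ((inv.chain_push hv).imp fun _ _ h => h.1)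
      (List.mem_cons_of_mem v hw)

lemma push (inv : DfsInv G (u :: stack) vis par)
    (hv : IsGreatest (G.unvisitedNbrs u vis : Set _) v) :
    DfsInv G (v :: u :: stack) (insert v vis) (update par v u) := by
  have hu : u ∈ vis := inv.stack_subset u List.mem_cons_self
  have heq := eqOn_update (par := par) hv
  refine ⟨by rw [heq inv.zero_mem, inv.par_zero], Finset.mem_insert_of_mem inv.zero_mem,
    ?_, ?_, ?_, ?_, inv.chain_push hv, ?_, ?_, ?_⟩
  · intro x hx
    rcases Finset.mem_insert.mp hx with rfl | hx
    · rw [update_self]; exact Finset.mem_insert_of_mem hu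
    · rw [heq hx]; exact Finset.mem_insert_of_mem (inv.mapsTo hx)
  · intro x hx hx0
    rcases Finset.mem_insert.mp hx with rfl | hx
    · rw [update_self]; exact (mem_unvisitedNbrs.mp hv.1).1.symm
    · rw [heq hx]; exact inv.adj_par x hx hx0
  · intro x hx
    rcases Finset.mem_insert.mp hx with rfl | hx
    · obtain ⟨k, hk⟩ := inv.reach u hu
      refine ⟨k + 1, ?_⟩
      rw [iterate_succ_apply, update_self, heq.iterate_of_mapsTo inv.mapsTo k hu, hk]
    · obtain ⟨k, hk⟩ := inv.reach x hx
      exact ⟨k, by rw [heq.iterate_of_mapsTo inv.mapsTo k hx, hk]⟩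
  · intro x hx
    rcases List.mem_cons.mp hx with rfl | hx
    exacts [Finset.mem_insert_self _ _, Finset.mem_insert_of_mem (inv.stack_subset x hx)]
  · intro _
    rw [List.getLast_cons (List.cons_ne_nil _ _)]
    exact inv.getLast_eq (List.cons_ne_nil _ _)
  · intro w hw hws x hwx
    rw [List.mem_cons, not_or] at hws
    exact Finset.mem_insert_of_mem
      (inv.closed w ((Finset.mem_insert.mp hw).resolve_left hws.1) hws.2 x hwx)
  · intro a ha b hb hab
    rcases Finset.mem_insert.mp ha with rfl | ha' <;>
      rcases Finset.mem_insert.mp hb with rfl | hb'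
    · exact absurd hab G.irrefl
    · exact Or.inl (inv.isDfsEdge_push hv hb' hab.symm)
    · exact Or.inr (inv.isDfsEdge_push hv ha' hab)
    · exact (inv.edges a ha' b hb' hab).imp (.of_eqOn heq inv.mapsTo ha')
        (.of_eqOn heq inv.mapsTo hb')

lemma pop (inv : DfsInv G (u :: stack) vis par) (h : ¬ (G.unvisitedNbrs u vis).Nonempty) :
    DfsInv G stack vis par := by
  refine ⟨inv.par_zero, inv.zero_mem, inv.mapsTo, inv.adj_par, inv.reach,
    fun x hx => inv.stack_subset x (List.mem_cons_of_mem u hx), inv.chain.tail, fun hs => ?_,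
    fun w hw hws x hwx => ?_, inv.edges⟩
  · rw [← List.getLast_cons hs]
    exact inv.getLast_eq (List.cons_ne_nil _ _)
  · by_cases hwu : w = u
    · subst hwu
      by_contra hx
      exact h ⟨x, mem_unvisitedNbrs.mpr ⟨hwx, hx⟩⟩
    · exact inv.closed w hw (by simp [hwu, hws]) x hwx

lemma dfs (inv : DfsInv G stack vis par) :
    DfsInv G [] (G.dfs stack vis par).2 (G.dfs stack vis par).1 := by
  induction stack, vis, par using SimpleGraph.dfs.induct G with
  | case1 => rwa [SimpleGraph.dfs]
  | case2 u stack vis par h _ ih =>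
    rw [SimpleGraph.dfs, dif_pos h]
    exact ih (inv.push (Finset.isGreatest_max' _ h))
  | case3 u stack vis par h ih =>
    rw [SimpleGraph.dfs, dif_neg h]
    exact ih (inv.pop h)

lemma vis_eq_univ (hG : G.Connected) (inv : DfsInv G [] vis par) : vis = Finset.univ := by
  have key {a b : Fin (n + 1)} (w : G.Walk a b) : a ∈ vis → b ∈ vis := by
    induction w with
    | nil => exact id
    | cons hadj _ ih => exact fun ha => ih (inv.closed _ ha List.not_mem_nil _ hadj)
  exact Finset.eq_univ_of_forall fun v => key (hG.preconnected 0 v).some inv.zero_mem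

end DfsInv

lemma dfsInv_init (G : SimpleGraph (Fin (n + 1))) : DfsInv G [0] {0} id := by
  refine ⟨rfl, Finset.mem_singleton_self 0, fun v hv => hv, ?_, ?_, ?_, List.isChain_singleton _,
    fun _ => rfl, ?_, ?_⟩
  · intro v hv hv0
    exact absurd (Finset.mem_singleton.mp hv) hv0
  · intro v hv
    exact ⟨0, Finset.mem_singleton.mp hv⟩
  · intro v hv
    simpa using hv
  · intro w hw hws
    simp_all
  · intro a ha b hb hab
    rw [Finset.mem_singleton.mp ha, Finset.mem_singleton.mp hb] at hab
    exact absurd hab G.irrefl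

lemma dfsInv_dfs (hG : G.Connected) : DfsInv G [] Finset.univ (G.dfs [0] {0} id).1 := by
  have inv := (dfsInv_init G).dfs
  rwa [inv.vis_eq_univ hG] at inv

noncomputable def dfsTree (G : SimpleGraph (Fin (n + 1))) (hG : G.Connected) : RTree n :=
  ⟨(G.dfs [0] {0} id).1, (dfsInv_dfs hG).par_zero,
    fun v => (dfsInv_dfs hG).reach v (Finset.mem_univ v)⟩

lemma isDfsTree_dfsTree (hG : G.Connected) : (G.dfsTree hG).IsDfsTree G := by
  have inv := dfsInv_dfs hG
  exact RTree.isDfsTree_of_isDfsEdge (fun v => inv.adj_par v (Finset.mem_univ v))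
    fun a b => inv.edges a (Finset.mem_univ a) b (Finset.mem_univ b)

end SimpleGraph

namespace SimpleGraph

variable {n : ℕ} {G : SimpleGraph (Fin (n + 1))} {t : RTree n} {u v : Fin (n + 1)}
  {stack : List (Fin (n + 1))} {vis : Finset (Fin (n + 1))} {par : Fin (n + 1) → Fin (n + 1)}

structure DfsFollows (t : RTree n) (stack : List (Fin (n + 1))) (vis : Finset (Fin (n + 1)))
    (par : Fin (n + 1) → Fin (n + 1)) : Prop where
  eqOn : Set.EqOn par t.parent vis
  children_mem : ∀ w ∈ vis, w ∉ stack → ∀ c, t.parent c = w → c ≠ w → c ∈ vis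

namespace DfsFollows

lemma iterate_mem (inv : DfsInv G stack vis par) (hf : DfsFollows t stack vis par)
    (hv : v ∈ vis) (k : ℕ) : t.parent^[k] v ∈ vis := by
  rw [hf.eqOn.symm.iterate_of_mapsTo inv.mapsTo k hv]
  exact inv.mapsTo.iterate k hv

lemma mem_of_isAncestor (inv : DfsInv G (u :: stack) vis par)
    (hf : DfsFollows t (u :: stack) vis par) {w : Fin (n + 1)} (hw : w ∈ vis)
    (hws : w ∉ u :: stack) (hwv : t.IsAncestor w v) : v ∈ vis ∧ v ∉ u :: stack := by
  obtain ⟨k, hk⟩ := hwv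
  induction k generalizing v with
  | zero => subst hk; exact ⟨hw, hws⟩
  | succ k ih =>
    obtain ⟨hpv, hpvs⟩ := ih (v := t.parent v) hk
    by_cases hvp : v = t.parent v
    · exact hvp ▸ ⟨hpv, hpvs⟩
    · have hv := hf.children_mem _ hpv hpvs v rfl hvp
      refine ⟨hv, fun hvs => hpvs ?_⟩
      rw [← hf.eqOn hv]
      exact List.apply_mem_of_isChain inv.isChain_par
        (fun h => by rw [inv.getLast_eq h, inv.par_zero]) hvs

lemma parent_eq (ht : t.IsDfsTree G) (inv : DfsInv G (u :: stack) vis par)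
    (hf : DfsFollows t (u :: stack) vis par) (hv : IsGreatest (G.unvisitedNbrs u vis : Set _) v) :
    t.parent v = u := by
  obtain ⟨huv, hv'⟩ := mem_unvisitedNbrs.mp hv.1
  have hu : u ∈ vis := inv.stack_subset u List.mem_cons_self
  rcases ht.isDfsEdge huv with (h | ⟨w, hwv, ⟨k, hk⟩, -⟩) | (h | ⟨w, hwu, hwv, hvw⟩)
  · exact absurd (h ▸ hf.iterate_mem inv hu 1) hv'
  · exact absurd (hwv ▸ hf.iterate_mem inv (hk ▸ hf.iterate_mem inv hu k) 1) hv'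
  · exact h
  exfalso
  by_cases hw : w ∈ vis
  · by_cases hws : w ∈ u :: stack
    · -- `w` would lie on a `t`-cycle through `u`, which forces `u = w = 0`
      obtain ⟨k, hk⟩ := List.exists_iterate_eq_of_isChain inv.isChain_par hws
      rw [← hf.eqOn.symm.iterate_of_mapsTo inv.mapsTo k hu] at hk
      have hcyc : t.parent^[k + 1] u = u := by rw [iterate_succ_apply', hk, hwu]
      have hu0 : u = 0 := by
        have := t.depth_iterate u (k + 1)
        rw [hcyc] at this
        exact (RTree.depth_eq_zero_iff (t := t)).mp (by omega)
      rw [← hk, hu0, iterate_fixed t.parent_zero] at hvw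
      exact Fin.not_lt_zero _ hvw
    · exact hv' (hf.mem_of_isAncestor inv hw hws hwv).1
  · have hw0 : w ≠ 0 := fun h => hw (h ▸ inv.zero_mem)
    have huw : G.Adj u w := hwu ▸ (ht.adj_parent hw0).symm
    exact (hv.2 (mem_unvisitedNbrs.mpr ⟨huw, hw⟩)).not_gt hvw

lemma push (ht : t.IsDfsTree G) (inv : DfsInv G (u :: stack) vis par)
    (hf : DfsFollows t (u :: stack) vis par) (hv : IsGreatest (G.unvisitedNbrs u vis : Set _) v) :
    DfsFollows t (v :: u :: stack) (insert v vis) (update par v u) := by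
  refine ⟨fun x hx => ?_, fun w hw hws c hc hcw => ?_⟩
  · rcases Finset.mem_insert.mp hx with rfl | hx
    · rw [update_self, hf.parent_eq ht inv hv]
    · rw [DfsInv.eqOn_update hv hx, hf.eqOn hx]
  · rw [List.mem_cons, not_or] at hws
    exact Finset.mem_insert_of_mem
      (hf.children_mem w ((Finset.mem_insert.mp hw).resolve_left hws.1) hws.2 c hc hcw)

lemma pop (ht : t.IsDfsTree G) (hf : DfsFollows t (u :: stack) vis par)
    (h : ¬ (G.unvisitedNbrs u vis).Nonempty) : DfsFollows t stack vis par := by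
  refine ⟨hf.eqOn, fun w hw hws c hc hcw => ?_⟩
  by_cases hwu : w = u
  · subst hwu
    have hc0 : c ≠ 0 := by
      rintro rfl
      exact hcw (hc ▸ t.parent_zero).symm
    by_contra hcv
    exact h ⟨c, mem_unvisitedNbrs.mpr ⟨hc ▸ (ht.adj_parent hc0).symm, hcv⟩⟩
  · exact hf.children_mem w hw (by simp [hwu, hws]) c hc hcw

lemma dfs (ht : t.IsDfsTree G) (inv : DfsInv G stack vis par) (hf : DfsFollows t stack vis par) :
    Set.EqOn (G.dfs stack vis par).1 t.parent (G.dfs stack vis par).2 := by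
  induction stack, vis, par using SimpleGraph.dfs.induct G with
  | case1 => rw [SimpleGraph.dfs]; exact hf.eqOn
  | case2 u stack vis par h _ ih =>
    rw [SimpleGraph.dfs, dif_pos h]
    have hv := Finset.isGreatest_max' _ h
    exact ih (inv.push hv) (hf.push ht inv hv)
  | case3 u stack vis par h ih =>
    rw [SimpleGraph.dfs, dif_neg h]
    exact ih (inv.pop h) (hf.pop ht h)

end DfsFollows

lemma dfsFollows_init (t : RTree n) : DfsFollows t [0] {0} id := by
  refine ⟨fun v hv => ?_, fun w hw hws => ?_⟩
  · obtain rfl : v = 0 := by simpa using hv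
    exact t.parent_zero.symm
  · simp_all

lemma dfsTree_eq (hG : G.Connected) (ht : t.IsDfsTree G) : G.dfsTree hG = t := by
  have h := ((dfsInv_init G).dfs).vis_eq_univ hG
  refine Subtype.ext (funext fun v => ?_)
  exact (dfsFollows_init t).dfs ht (dfsInv_init G) (h ▸ Finset.mem_coe.mpr (Finset.mem_univ v))

end SimpleGraph

namespace RTree

variable (n : ℕ)

noncomputable def graphEquiv :
    (Σ t : RTree n, Finset t.Inversion) ≃ {G : SimpleGraph (Fin (n + 1)) // G.Connected} := by
  classical
  refine Equiv.ofBijective (fun x => ⟨x.1.graph x.2, graph_connected⟩) ⟨?_, fun ⟨G, hG⟩ => ?_⟩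
  · rintro ⟨t, S⟩ ⟨t', S'⟩ h
    have hG : t.graph S = t'.graph S' := congrArg Subtype.val h
    have ht' : t'.IsDfsTree (t.graph S) := hG ▸ isDfsTree_graph S'
    obtain rfl : t = t' :=
      (dfsTree_eq graph_connected (isDfsTree_graph S)).symm.trans (dfsTree_eq _ ht')
    obtain rfl : S = S' := Finset.ext fun q => by rw [mem_iff_adj_graph, mem_iff_adj_graph, hG]
    rfl
  · exact ⟨⟨G.dfsTree hG, _⟩, Subtype.ext (isDfsTree_dfsTree hG).graph_filter_adj⟩

variable {n}

lemma graphEquiv_apply (x : Σ t : RTree n, Finset t.Inversion) :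
    (graphEquiv n x).1 = x.1.graph x.2 := rfl

end RTree

lemma Fintype.sum_pow_card_finset {R : Type*} [CommSemiring R] (α : Type*) [Fintype α] (a : R) :
    ∑ s : Finset α, a ^ s.card = (1 + a) ^ Nat.card α := by
  simpa [Nat.card_eq_fintype_card, add_comm] using Fintype.sum_pow_mul_eq_add_pow α a 1

/-- `C_{n+1}(x) = x^n * I_{n+1}(1 + x)`: the edge enumerator of labeled connected simple graphs
equals the shifted inversion enumerator of labeled trees. -/
theorem connPoly_eq_shifted_invPoly (n : ℕ) :
    connPoly (n + 1) = Polynomial.X ^ n * (invPoly n).comp (1 + Polynomial.X) := by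
  classical
  rw [connPoly, invPoly, finsum_eq_sum_of_fintype, finsum_eq_sum_of_fintype, sum_comp,
    Finset.mul_sum]
  calc ∑ G : {G : SimpleGraph (Fin (n + 1)) // G.Connected}, (X : ℤ[X]) ^ G.1.edgeFinset.card
      = ∑ x : Σ t : RTree n, Finset t.Inversion, (X : ℤ[X]) ^ (n + x.2.card) :=
        (Fintype.sum_equiv (RTree.graphEquiv n) _ _ fun x => by
          rw [RTree.graphEquiv_apply, RTree.card_edgeFinset_graph]).symm
    _ = ∑ t : RTree n, X ^ n * (1 + X) ^ Nat.card t.Inversion := by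
        rw [← Finset.univ_sigma_univ, Finset.sum_sigma]
        simp_rw [pow_add, ← Finset.mul_sum, Fintype.sum_pow_card_finset]
    _ = _ := Fintype.sum_equiv (RTree.equivIsTree n) _ _ fun t => by
        rw [X_pow_comp, RTree.equivIsTree_apply, RTree.treeInv_graph_empty]
end

section
/- If the coefficient sequences of two polynomials f and g are each log-concave with no internal zeros and nonnegative, then the coefficient sequence of f·g is log-concave. -/
namespace LogConcaveMulAux

open Polynomial Finset

/-- Key ratio-monotonicity lemma over ℕ. -/
lemma nat_key (p : Polynomial ℝ) (h0 : ∀ i, 0 ≤ p.coeff i)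
    (hlc : PolyLogConcaveR p) (hz : NoInternalZeros p) :
    ∀ d v : ℕ, p.coeff (v + d + 1) * p.coeff v ≤ p.coeff (v + d) * p.coeff (v + 1) := by
  intro d
  induction d with
  | zero => intro v; simp [mul_comm]
  | succ d ih =>
    intro v
    by_cases h1 : p.coeff (v + 1) = 0
    · have hL : p.coeff (v + (d + 1) + 1) * p.coeff v = 0 := by
        by_cases hv : p.coeff v = 0
        · rw [hv, mul_zero]
        · by_cases hk : p.coeff (v + (d + 1) + 1) = 0
          · rw [hk, zero_mul]
          · exact absurd h1 (hz v (v + 1) (v + (d + 1) + 1) (by omega) (by omega) hv hk)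
      rw [hL]; exact mul_nonneg (h0 _) (h0 _)
    · have hpos : 0 < p.coeff (v + 1) := (h0 _).lt_of_ne (Ne.symm h1)
      have hih := ih (v + 1)
      have e1 : v + 1 + d + 1 = v + (d + 1) + 1 := by omega
      have e2 : v + 1 + d = v + (d + 1) := by omega
      have e3 : v + 1 + 1 = v + 2 := by omega
      rw [e1, e2, e3] at hih
      have hlc' := hlc v
      have key : p.coeff (v + (d + 1) + 1) * p.coeff v * p.coeff (v + 1)
          ≤ p.coeff (v + (d + 1)) * p.coeff (v + 1) * p.coeff (v + 1) := by
        nlinarith [mul_le_mul_of_nonneg_right hih (h0 v),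
          mul_le_mul_of_nonneg_left hlc' (h0 (v + (d + 1))), h0 v, h0 (v + 2),
          h0 (v + (d + 1))]
      exact le_of_mul_le_mul_right key hpos

/-- Extend the coefficient sequence of a polynomial to ℤ by zero. -/
noncomputable def ext (p : Polynomial ℝ) (x : ℤ) : ℝ :=
  if 0 ≤ x then p.coeff x.toNat else 0

lemma ext_nonneg (p : Polynomial ℝ) (h0 : ∀ i, 0 ≤ p.coeff i) (x : ℤ) : 0 ≤ ext p x := by
  unfold ext; split
  · exact h0 _
  · exact le_rfl

lemma ext_key (p : Polynomial ℝ) (h0 : ∀ i, 0 ≤ p.coeff i)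
    (hlc : PolyLogConcaveR p) (hz : NoInternalZeros p) :
    ∀ u v : ℤ, v ≤ u → ext p (u + 1) * ext p v ≤ ext p u * ext p (v + 1) := by
  intro u v hvu
  by_cases hv : 0 ≤ v
  · have hu : 0 ≤ u := le_trans hv hvu
    have h1 : ext p (u + 1) = p.coeff (v.toNat + (u - v).toNat + 1) := by
      unfold ext; rw [if_pos (by omega : (0:ℤ) ≤ u + 1)]; congr 1; omega
    have h2 : ext p v = p.coeff v.toNat := by unfold ext; rw [if_pos hv]
    have h3 : ext p u = p.coeff (v.toNat + (u - v).toNat) := by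
      unfold ext; rw [if_pos hu]; congr 1; omega
    have h4 : ext p (v + 1) = p.coeff (v.toNat + 1) := by
      unfold ext; rw [if_pos (by omega : (0:ℤ) ≤ v + 1)]; congr 1; omega
    rw [h1, h2, h3, h4]
    exact nat_key p h0 hlc hz _ _
  · have h2 : ext p v = 0 := by unfold ext; rw [if_neg hv]
    rw [h2, mul_zero]
    exact mul_nonneg (ext_nonneg p h0 u) (ext_nonneg p h0 (v + 1))

/-- Convolution formula with a shift parameter. -/
lemma conv (f g : Polynomial ℝ) (m : ℕ) (s : ℤ) (S : Finset ℤ)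
    (hS : ∀ j : ℕ, j ≤ m → (j : ℤ) + s ∈ S) :
    (f * g).coeff m = ∑ k ∈ S, ext g ((m : ℤ) + s - k) * ext f (k - s) := by
  have hinj : Function.Injective (fun j : ℕ => (j : ℤ) + s) := by
    intro a b h
    simp only at h
    omega
  set T : Finset ℤ := (Finset.range (m + 1)).map ⟨fun j : ℕ => (j : ℤ) + s, hinj⟩ with hT
  have hTS : T ⊆ S := by
    intro k hk
    simp only [hT, Finset.mem_map, Finset.mem_range, Function.Embedding.coeFn_mk] at hk
    obtain ⟨j, hj, rfl⟩ := hk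
    exact hS j (by omega)
  rw [← Finset.sum_subset hTS ?_]
  · rw [hT, Finset.sum_map]
    simp only [Function.Embedding.coeFn_mk]
    have hcong : ∀ j ∈ Finset.range (m + 1),
        ext g ((m : ℤ) + s - ((j : ℤ) + s)) * ext f ((j : ℤ) + s - s)
          = g.coeff (m - j) * f.coeff j := by
      intro j hj
      rw [Finset.mem_range] at hj
      have e1 : (m : ℤ) + s - ((j : ℤ) + s) = ((m - j : ℕ) : ℤ) := by omega
      have e2 : (j : ℤ) + s - s = (j : ℤ) := by ring
      rw [e1, e2]
      unfold ext
      rw [if_pos (Int.natCast_nonneg _), if_pos (Int.natCast_nonneg _),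
        Int.toNat_natCast, Int.toNat_natCast]
    rw [Finset.sum_congr rfl hcong]
    rw [Polynomial.coeff_mul, Finset.Nat.sum_antidiagonal_eq_sum_range_succ_mk]
    exact Finset.sum_congr rfl fun j hj => by rw [mul_comm]
  · intro k hkS hkT
    by_cases h1 : k - s < 0
    · have hz' : ext f (k - s) = 0 := by unfold ext; rw [if_neg (by omega)]
      rw [hz', mul_zero]
    · by_cases h2 : (m : ℤ) + s - k < 0
      · have hz' : ext g ((m : ℤ) + s - k) = 0 := by unfold ext; rw [if_neg (by omega)]
        rw [hz', zero_mul]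
      · exfalso
        apply hkT
        simp only [hT, Finset.mem_map, Finset.mem_range, Function.Embedding.coeFn_mk]
        exact ⟨(k - s).toNat, by omega, by omega⟩

/-- Pointwise nonnegativity of the symmetrized Cauchy–Binet summand. -/
lemma pair (f g : Polynomial ℝ)
    (hf0 : ∀ i, 0 ≤ f.coeff i) (hg0 : ∀ i, 0 ≤ g.coeff i)
    (hf : PolyLogConcaveR f) (hg : PolyLogConcaveR g)
    (hfz : NoInternalZeros f) (hgz : NoInternalZeros g) (n : ℕ) :
    ∀ k l : ℤ, k ≤ l →
      0 ≤ (ext g ((n:ℤ)+1-k) * ext f k * (ext g ((n:ℤ)+2-l) * ext f (l-1))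
          - ext g ((n:ℤ)+1-k) * ext f (k-1) * (ext g ((n:ℤ)+2-l) * ext f l))
          + (ext g ((n:ℤ)+1-l) * ext f l * (ext g ((n:ℤ)+2-k) * ext f (k-1))
          - ext g ((n:ℤ)+1-l) * ext f (l-1) * (ext g ((n:ℤ)+2-k) * ext f k)) := by
  intro k l hkl
  have hD : 0 ≤ ext f k * ext f (l-1) - ext f (k-1) * ext f l := by
    have h := ext_key f hf0 hf hfz (l - 1) (k - 1) (by omega)
    have e1 : l - 1 + 1 = l := by ring
    have e2 : k - 1 + 1 = k := by ring
    rw [e1, e2] at h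
    linarith [h]
  have hE : 0 ≤ ext g ((n:ℤ)+1-k) * ext g ((n:ℤ)+2-l)
      - ext g ((n:ℤ)+1-l) * ext g ((n:ℤ)+2-k) := by
    have h := ext_key g hg0 hg hgz ((n:ℤ)+1-k) ((n:ℤ)+1-l) (by omega)
    have e1 : (n:ℤ)+1-k+1 = (n:ℤ)+2-k := by ring
    have e2 : (n:ℤ)+1-l+1 = (n:ℤ)+2-l := by ring
    rw [e1, e2] at h
    linarith [h]
  nlinarith [mul_nonneg hD hE]

end LogConcaveMulAux

open LogConcaveMulAux Finset in
/-- If `f` and `g` each have nonnegative log-concave coefficient sequences with no internal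
zeros, then `f * g` has a log-concave coefficient sequence. -/
theorem logConcave_mul (f g : Polynomial ℝ)
    (hf0 : ∀ i, 0 ≤ f.coeff i) (hg0 : ∀ i, 0 ≤ g.coeff i)
    (hf : PolyLogConcaveR f) (hg : PolyLogConcaveR g)
    (hfz : NoInternalZeros f) (hgz : NoInternalZeros g) :
    PolyLogConcaveR (f * g) := by
  intro n
  set S : Finset ℤ := Finset.Icc (-1 : ℤ) ((n : ℤ) + 3) with hSdef
  set W : ℤ → ℤ → ℝ := fun k l =>
    ext g ((n:ℤ)+1-k) * ext f k * (ext g ((n:ℤ)+2-l) * ext f (l-1))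
      - ext g ((n:ℤ)+1-k) * ext f (k-1) * (ext g ((n:ℤ)+2-l) * ext f l) with hW
  have h1 : (f * g).coeff (n + 1) = ∑ k ∈ S, ext g ((n:ℤ) + 1 - k) * ext f k := by
    rw [conv f g (n + 1) 0 S (fun j hj => by
      simp only [hSdef, Finset.mem_Icc]; omega)]
    refine Finset.sum_congr rfl fun k _ => ?_
    have e1 : ((n + 1 : ℕ) : ℤ) + 0 - k = (n:ℤ) + 1 - k := by push_cast; ring
    have e2 : k - 0 = k := by ring
    rw [e1, e2]
  have h2 : (f * g).coeff (n + 2) = ∑ l ∈ S, ext g ((n:ℤ) + 2 - l) * ext f l := by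
    rw [conv f g (n + 2) 0 S (fun j hj => by
      simp only [hSdef, Finset.mem_Icc]; omega)]
    refine Finset.sum_congr rfl fun k _ => ?_
    have e1 : ((n + 2 : ℕ) : ℤ) + 0 - k = (n:ℤ) + 2 - k := by push_cast; ring
    have e2 : k - 0 = k := by ring
    rw [e1, e2]
  have h3 : (f * g).coeff n = ∑ k ∈ S, ext g ((n:ℤ) + 1 - k) * ext f (k - 1) := by
    exact conv f g n 1 S (fun j hj => by
      simp only [hSdef, Finset.mem_Icc]; omega)
  have h4 : (f * g).coeff (n + 1) = ∑ l ∈ S, ext g ((n:ℤ) + 2 - l) * ext f (l - 1) := by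
    rw [conv f g (n + 1) 1 S (fun j hj => by
      simp only [hSdef, Finset.mem_Icc]; omega)]
    refine Finset.sum_congr rfl fun k _ => ?_
    have e1 : ((n + 1 : ℕ) : ℤ) + 1 - k = (n:ℤ) + 2 - k := by push_cast; ring
    rw [e1]
  have hsum : 0 ≤ ∑ k ∈ S, ∑ l ∈ S, (W k l + W l k) := by
    refine Finset.sum_nonneg fun k _ => Finset.sum_nonneg fun l _ => ?_
    rcases le_total k l with hkl | hlk
    · have := pair f g hf0 hg0 hf hg hfz hgz n k l hkl
      simp only [hW]
      linarith [this]
    · have := pair f g hf0 hg0 hf hg hfz hgz n l k hlk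
      simp only [hW]
      linarith [this]
  have hswap : ∑ k ∈ S, ∑ l ∈ S, W l k = ∑ k ∈ S, ∑ l ∈ S, W k l := Finset.sum_comm
  have hsplit : ∑ k ∈ S, ∑ l ∈ S, (W k l + W l k)
      = (∑ k ∈ S, ∑ l ∈ S, W k l) + ∑ k ∈ S, ∑ l ∈ S, W l k := by
    rw [← Finset.sum_add_distrib]
    exact Finset.sum_congr rfl fun k _ => Finset.sum_add_distrib
  have hWsum : ∑ k ∈ S, ∑ l ∈ S, W k l
      = (f * g).coeff (n + 1) * (f * g).coeff (n + 1)
        - (f * g).coeff n * (f * g).coeff (n + 2) := by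
    have hA : (f * g).coeff (n + 1) * (f * g).coeff (n + 1)
        = ∑ k ∈ S, ∑ l ∈ S,
            (ext g ((n:ℤ)+1-k) * ext f k) * (ext g ((n:ℤ)+2-l) * ext f (l-1)) := by
      nth_rewrite 1 [h1]
      rw [h4, Finset.sum_mul_sum]
    have hB : (f * g).coeff n * (f * g).coeff (n + 2)
        = ∑ k ∈ S, ∑ l ∈ S,
            (ext g ((n:ℤ)+1-k) * ext f (k-1)) * (ext g ((n:ℤ)+2-l) * ext f l) := by
      rw [h3, h2, Finset.sum_mul_sum]
    calc ∑ k ∈ S, ∑ l ∈ S, W k l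
        = ∑ k ∈ S, ∑ l ∈ S,
            ((ext g ((n:ℤ)+1-k) * ext f k) * (ext g ((n:ℤ)+2-l) * ext f (l-1))
              - (ext g ((n:ℤ)+1-k) * ext f (k-1)) * (ext g ((n:ℤ)+2-l) * ext f l)) := by
          refine Finset.sum_congr rfl fun k _ => Finset.sum_congr rfl fun l _ => ?_
          simp only [hW]
      _ = (∑ k ∈ S, ∑ l ∈ S,
              (ext g ((n:ℤ)+1-k) * ext f k) * (ext g ((n:ℤ)+2-l) * ext f (l-1)))
          - ∑ k ∈ S, ∑ l ∈ S,
              (ext g ((n:ℤ)+1-k) * ext f (k-1)) * (ext g ((n:ℤ)+2-l) * ext f l) := by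
          simp [Finset.sum_sub_distrib]
      _ = (f * g).coeff (n + 1) * (f * g).coeff (n + 1)
          - (f * g).coeff n * (f * g).coeff (n + 2) := by rw [← hA, ← hB]
  have hfinal : 0 ≤ 2 * ((f * g).coeff (n + 1) * (f * g).coeff (n + 1)
      - (f * g).coeff n * (f * g).coeff (n + 2)) := by
    linarith [hsum, hsplit, hswap, hWsum]
  nlinarith [hfinal]
end
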